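/- arXiv:1805.07267 — 8 statements merged into one kernel-verified Lean document; each statement's English description precedes it below -/
import Mathlib

section
/- Let ν be a nonzero σ-finite measure on ℝ whose moment generating function is finite for all real arguments, and let h(η) = log ∫ e^{ηx} dν(x) be the associated log-partition (cumulant) function, so that h''(η) ≥ 0 and h'(η) equals the mean of the exponentially tilted distribution. Fix a point y in the closure of the support of ν such that there is no η ∈ ℝ with h'(η) = y (the maximum likelihood estimate of η for the observation y does not exist), and suppose ν has an atom at y and y is the essential supremum (respectively essential infimum) of ν. Then, as η → c with c = +∞ (respectively c = −∞): h'(η) → y, h''(η) → 0, and η·h''(η) → 0. -/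
/-!
Write `ρₜ = ν.tilted (t * ·)` for the exponentially tilted probability measures: the first two
derivatives of the cumulant function are the mean and the variance of `ρₜ`, so it suffices that
the first two moments of `ρₜ` about `y` are `O(1/|t|)` and `O(1/t²)`. The atom gives
`∫ e^{tx} dν ≥ ν{y} e^{ty}`, so `ρₜ` has density at most `e^{t(x - y)} / ν{y}` with respect to `ν`;
where `ν` lives, `s = t(y - x) ≥ 0` and `|x - y|ᵏ e^{-s} = sᵏ e^{-s} / |t|ᵏ ≤ k! / |t|ᵏ`.
-/

open MeasureTheory Filter Topology ProbabilityTheory Real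
open scoped Nat

lemma pow_mul_exp_neg_le_factorial {s : ℝ} (hs : 0 ≤ s) (k : ℕ) : s ^ k * exp (-s) ≤ k ! := by
  have h := pow_div_factorial_le_exp s hs k
  rw [div_le_iff₀ (by positivity), mul_comm] at h
  rw [exp_neg, ← div_eq_mul_inv, div_le_iff₀ (exp_pos s)]
  exact h

lemma abs_pow_mul_exp_neg_mul_le {t x : ℝ} (ht : t ≠ 0) (hx : 0 ≤ t * x) (k : ℕ) :
    |x| ^ k * exp (-(t * x)) ≤ k ! / |t| ^ k := by
  rw [le_div_iff₀ (by positivity), mul_right_comm, ← mul_pow, mul_comm |x|, ← abs_mul,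
    abs_of_nonneg hx]
  exact pow_mul_exp_neg_le_factorial hx k

section Tilted

variable {ν : Measure ℝ}

lemma mem_interior_integrableExpSet_id (hint : ∀ t : ℝ, Integrable (fun x => exp (t * x)) ν)
    (t : ℝ) : t ∈ interior (integrableExpSet id ν) := by
  rw [show integrableExpSet id ν = Set.univ from Set.eq_univ_of_forall hint, interior_univ]
  trivial

lemma measureReal_singleton_mul_exp_le_mgf {t : ℝ} (hint : Integrable (fun x => exp (t * x)) ν)
    (y : ℝ) : ν.real {y} * exp (t * y) ≤ mgf id ν t :=
  calc ν.real {y} * exp (t * y) = ∫ x in {y}, exp (t * x) ∂ν := by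
        rw [integral_singleton, smul_eq_mul]
    _ ≤ mgf id ν t := setIntegral_le_integral hint (Eventually.of_forall fun _ => (exp_pos _).le)

lemma norm_integral_tilted_sub_pow_le [IsFiniteMeasure ν] {t y : ℝ}
    (hint : Integrable (fun x => exp (t * x)) ν) (hy : 0 < ν.real {y}) (ht : t ≠ 0)
    (hsign : ∀ᵐ x ∂ν, 0 ≤ t * (y - x)) (k : ℕ) :
    ‖∫ x, (x - y) ^ k ∂(ν.tilted (t * ·))‖ ≤ k ! * ν.real Set.univ / ν.real {y} / |t| ^ k := by
  have hZ := measureReal_singleton_mul_exp_le_mgf hint y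
  have hZpos : 0 < mgf id ν t := lt_of_lt_of_le (by positivity) hZ
  rw [show ∫ x, (x - y) ^ k ∂(ν.tilted (t * ·))
      = ∫ x, (exp (t * x) / mgf id ν t) • (x - y) ^ k ∂ν from
    integral_tilted_mul_eq_mgf (X := id) _]
  refine (norm_integral_le_of_norm_le_const ?_).trans_eq (by ring :
    k ! / |t| ^ k * (ν.real {y})⁻¹ * ν.real Set.univ = _)
  filter_upwards [hsign] with x hx
  calc ‖(exp (t * x) / mgf id ν t) • (x - y) ^ k‖
      = |y - x| ^ k * exp (-(t * (y - x))) * (exp (t * y) / mgf id ν t) := by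
        rw [norm_smul, norm_div, norm_pow, Real.norm_eq_abs, Real.norm_eq_abs, Real.norm_eq_abs,
          abs_exp, abs_of_pos hZpos, abs_sub_comm, show t * x = -(t * (y - x)) + t * y by ring,
          exp_add]
        ring
    _ ≤ k ! / |t| ^ k * (ν.real {y})⁻¹ := by
        gcongr
        · exact abs_pow_mul_exp_neg_mul_le ht hx k
        · rw [div_le_iff₀ hZpos, inv_mul_eq_div, le_div_iff₀ hy, mul_comm]
          exact hZ

lemma deriv_cgf_sub_eq_integral_tilted [NeZero ν]
    (hint : ∀ t : ℝ, Integrable (fun x => exp (t * x)) ν) (t y : ℝ) :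
    deriv (cgf id ν) t - y = ∫ x, (x - y) ∂(ν.tilted (t * ·)) := by
  have : IsProbabilityMeasure (ν.tilted (t * ·)) := isProbabilityMeasure_tilted (hint t)
  have hmem := mem_interior_integrableExpSet_id hint t
  have hmean : ∫ x, x ∂(ν.tilted (t * ·)) = deriv (cgf id ν) t := integral_tilted_mul_self hmem
  have hX : Integrable (fun x => x) (ν.tilted (t * ·)) :=
    (memLp_tilted_mul hmem 1).integrable le_rfl
  rw [integral_sub hX (integrable_const y), hmean, integral_const]
  simp

lemma iteratedDeriv_two_cgf_le_integral_tilted [NeZero ν]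
    (hint : ∀ t : ℝ, Integrable (fun x => exp (t * x)) ν) (t y : ℝ) :
    iteratedDeriv 2 (cgf id ν) t ≤ ∫ x, (x - y) ^ 2 ∂(ν.tilted (t * ·)) := by
  have : IsProbabilityMeasure (ν.tilted (t * ·)) := isProbabilityMeasure_tilted (hint t)
  have hmem := mem_interior_integrableExpSet_id hint t
  have hvar : Var[id; ν.tilted (t * ·)] = iteratedDeriv 2 (cgf id ν) t := variance_tilted_mul hmem
  have hX : AEStronglyMeasurable id (ν.tilted (t * ·)) := (memLp_tilted_mul hmem 1).1
  rw [← hvar, ← variance_sub_const hX y]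
  exact variance_le_expectation_sq (hX.sub aestronglyMeasurable_const)

theorem tendsto_cgf_derivatives_of_atom {l : Filter ℝ} {y : ℝ}
    (hint : ∀ t : ℝ, Integrable (fun x => exp (t * x)) ν) (hatom : 0 < ν {y})
    (hl : Tendsto (|·|) l atTop) (hsign : ∀ᶠ t in l, ∀ᵐ x ∂ν, 0 ≤ t * (y - x)) :
    Tendsto (deriv (cgf id ν)) l (𝓝 y) ∧ Tendsto (iteratedDeriv 2 (cgf id ν)) l (𝓝 0) ∧
      Tendsto (fun t => t * iteratedDeriv 2 (cgf id ν) t) l (𝓝 0) := by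
  have : IsFiniteMeasure ν :=
    (integrable_const_iff_isFiniteMeasure one_ne_zero).1 (by simpa using hint 0)
  have : NeZero ν := ⟨fun h => by simp [h] at hatom⟩
  have hy : 0 < ν.real {y} := ENNReal.toReal_pos hatom.ne' (measure_ne_top ν _)
  set C : ℕ → ℝ := fun k => k ! * ν.real Set.univ / ν.real {y}
  have hmoment (k : ℕ) : ∀ᶠ t in l, ‖∫ x, (x - y) ^ k ∂(ν.tilted (t * ·))‖ ≤ C k / |t| ^ k := by
    filter_upwards [hsign, hl.eventually_gt_atTop 0] with t ht ht0
    exact norm_integral_tilted_sub_pow_le (hint t) hy (abs_pos.1 ht0) ht k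
  have hvar_nonneg (t : ℝ) : 0 ≤ iteratedDeriv 2 (cgf id ν) t :=
    variance_tilted_mul (mem_interior_integrableExpSet_id hint t) ▸ variance_nonneg _ _
  have hvar : ∀ᶠ t in l, iteratedDeriv 2 (cgf id ν) t ≤ C 2 / |t| ^ 2 := by
    filter_upwards [hmoment 2] with t ht
    exact (iteratedDeriv_two_cgf_le_integral_tilted hint t y).trans ((le_abs_self _).trans ht)
  refine ⟨?_, ?_, ?_⟩
  · refine tendsto_sub_nhds_zero_iff.1
      (squeeze_zero_norm' ?_ ((tendsto_const_nhds (x := C 1)).div_atTop hl))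
    filter_upwards [hmoment 1] with t ht
    simpa [deriv_cgf_sub_eq_integral_tilted hint t y] using ht
  · exact squeeze_zero' (Eventually.of_forall hvar_nonneg) hvar
      (tendsto_const_nhds.div_atTop ((tendsto_pow_atTop two_ne_zero).comp hl))
  · refine squeeze_zero_norm' ?_ ((tendsto_const_nhds (x := C 2)).div_atTop hl)
    filter_upwards [hvar, hl.eventually_gt_atTop 0] with t ht ht0
    rw [norm_mul, Real.norm_eq_abs, Real.norm_of_nonneg (hvar_nonneg t)]
    calc |t| * iteratedDeriv 2 (cgf id ν) t ≤ |t| * (C 2 / |t| ^ 2) := by gcongr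
      _ = C 2 / |t| := by field_simp

end Tilted

theorem cumulant_limits_no_mle_general
    (ν : Measure ℝ)
    (hint : ∀ η : ℝ, Integrable (fun x => Real.exp (η * x)) ν)
    (h1 h2 : ℝ → ℝ)
    (hd2 : ∀ η, HasDerivAt h1 (h2 η) η)
    (hmean : ∀ η, h1 η = (∫ x, x * Real.exp (η * x) ∂ν) / (∫ x, Real.exp (η * x) ∂ν))
    (y : ℝ)
    (hatom : 0 < ν {y}) :
    ((∀ᵐ x ∂ν, x ≤ y) →
        Tendsto h1 atTop (nhds y) ∧ Tendsto h2 atTop (nhds 0) ∧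
          Tendsto (fun η => η * h2 η) atTop (nhds 0)) ∧
    ((∀ᵐ x ∂ν, y ≤ x) →
        Tendsto h1 atBot (nhds y) ∧ Tendsto h2 atBot (nhds 0) ∧
          Tendsto (fun η => η * h2 η) atBot (nhds 0)) := by
  have h1_eq : h1 = deriv (cgf id ν) := funext fun η => by
    rw [hmean, deriv_cgf (mem_interior_integrableExpSet_id hint η)]
    rfl
  have h2_eq : h2 = iteratedDeriv 2 (cgf id ν) := funext fun η => by
    rw [iteratedDeriv_succ, iteratedDeriv_one, ← h1_eq, (hd2 η).deriv]
  subst h1_eq h2_eq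
  refine ⟨fun hle => tendsto_cgf_derivatives_of_atom hint hatom tendsto_abs_atTop_atTop ?_,
    fun hge => tendsto_cgf_derivatives_of_atom hint hatom tendsto_abs_atBot_atTop ?_⟩
  · filter_upwards [eventually_ge_atTop 0] with η hη
    filter_upwards [hle] with x hx using mul_nonneg hη (sub_nonneg.2 hx)
  · filter_upwards [eventually_le_atBot 0] with η hη
    filter_upwards [hge] with x hx using mul_nonneg_of_nonpos_of_nonpos hη (sub_nonpos.2 hx)

/-- **Limits of the cumulant function at a boundary observation (Lemma 1).**
Let `ν` be a nonzero σ-finite measure on `ℝ` whose moment generating function is finite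
everywhere, `h(η) = log ∫ e^{ηx} dν(x)` the log-partition function, `h1 = h'` (the mean of
the exponentially tilted distribution) and `h2 = h''≥ 0`. If `y` lies in the closure of
the support of `ν`, `ν` has an atom at `y`, and there is no `η ∈ ℝ` with `h1 η = y`
(the MLE does not exist), then: if `y` is the essential supremum of `ν`, as `η → +∞` one
has `h1 η → y`, `h2 η → 0` and `η · h2 η → 0`; respectively, if `y` is the essential
infimum of `ν`, the same limits hold as `η → −∞`. -/
theorem cumulant_limits_no_mle
    (ν : Measure ℝ) (hne : ν ≠ 0) [SigmaFinite ν]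
    (hint : ∀ η : ℝ, Integrable (fun x => Real.exp (η * x)) ν)
    (h h1 h2 : ℝ → ℝ)
    (hdef : ∀ η, h η = Real.log (∫ x, Real.exp (η * x) ∂ν))
    (hd1 : ∀ η, HasDerivAt h (h1 η) η)
    (hd2 : ∀ η, HasDerivAt h1 (h2 η) η)
    (hnn : ∀ η, 0 ≤ h2 η)
    (hmean : ∀ η, h1 η = (∫ x, x * Real.exp (η * x) ∂ν) / (∫ x, Real.exp (η * x) ∂ν))
    (y : ℝ)
    (hsupp : y ∈ closure {x : ℝ | ∀ U ∈ nhds x, 0 < ν U})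
    (hnomle : ¬∃ η : ℝ, h1 η = y)
    (hatom : 0 < ν {y}) :
    ((∀ᵐ x ∂ν, x ≤ y) →
        Tendsto h1 atTop (nhds y) ∧ Tendsto h2 atTop (nhds 0) ∧
          Tendsto (fun η => η * h2 η) atTop (nhds 0)) ∧
    ((∀ᵐ x ∂ν, y ≤ x) →
        Tendsto h1 atBot (nhds y) ∧ Tendsto h2 atBot (nhds 0) ∧
          Tendsto (fun η => η * h2 η) atBot (nhds 0)) :=
  cumulant_limits_no_mle_general ν hint h1 h2 hd2 hmean y hatom
end

section
/- For i fixed, let y_i ∈ ℝ^{n_i}, let X_i be an n_i × p real matrix, Z_i an n_i × r real matrix, β ∈ ℝ^p, and let Ω be an r × r symmetric positive definite matrix. For j = 1, …, n_i let h_{ij} be the log-partition function of a one-parameter exponential family observation y_{ij} (so h_{ij}'' ≥ 0), and define g_i(η) = (h_{i1}'(η_1), …, h_{in_i}'(η_{n_i}))^T and H_i(η) = diag(h_{i1}''(η_1), …, h_{in_i}''(η_{n_i})) for η ∈ ℝ^{n_i}. Define Λ_i(η̂) = (Ω + Z_i^T H_i(η̂) Z_i)^{−1} and λ_i(η̂)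 = Λ_i(η̂) Z_i^T { y_i − g_i(η̂) + H_i(η̂)(η̂ − X_i β) }. Let c_i ∈ (ℝ ∪ {±∞})^{n_i} have coordinates c_{ij} = η̂_{ij}^{ML} when the MLE exists and c_{ij} = lim_{h_{ij}'(η)→y_{ij}} η ∈ {±∞} otherwise, where in the latter case h_{ij}'(η) → y_{ij}, h_{ij}''(η) → 0 and η·h_{ij}''(η) → 0 as η → c_{ij}. Then the limit of λ_i(η̂) as η̂ → c_i exists; moreover, if the MLE η̂_{ij}^{ML} does not exist for every j = 1, …, n_i, this limit equals the zero vector. -/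
/-!
`λ_i(η̂)` is a continuous function of two vectors, the diagonal of `H_i(η̂)` and the residual
`y_i − g_i(η̂) + H_i(η̂)(η̂ − X_i β)`, and both converge coordinatewise: where the MLE exists by
continuity at `c_{ij}`, and where it does not because `h_{ij}' → y_{ij}`, `h_{ij}'' → 0` and
`η h_{ij}''(η) → 0`, so that both limits vanish. The limit diagonal is still nonnegative, so
`Ω + Z_iᵀ H Z_i` stays positive definite at the limit, where matrix inversion is therefore continuous.
-/

open Matrix Filter Topology

section Assembly

variable {ι κ : Type*} [Fintype ι] [DecidableEq ι] [Fintype κ]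

theorem Matrix.PosDef.add_transpose_mul_diagonal_mul {Ω : Matrix κ κ ℝ} (hΩ : Ω.PosDef)
    (Z : Matrix ι κ ℝ) {d : ι → ℝ} (hd : 0 ≤ d) : (Ω + Zᵀ * diagonal d * Z).PosDef := by
  have hZDZ := (posSemidef_diagonal_iff.mpr hd).conjTranspose_mul_mul_same Z
  rw [conjTranspose_eq_transpose_of_trivial] at hZDZ
  exact hΩ.add_posSemidef hZDZ

theorem continuousAt_inv_add_transpose_mul_diagonal_mul_mulVec [DecidableEq κ]
    {Ω : Matrix κ κ ℝ} (hΩ : Ω.PosDef) (Z : Matrix ι κ ℝ) {d : ι → ℝ} (hd : 0 ≤ d) (v : ι → ℝ) :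
    ContinuousAt (fun q : (ι → ℝ) × (ι → ℝ) => (Ω + Zᵀ * diagonal q.1 * Z)⁻¹ *ᵥ (Zᵀ *ᵥ q.2))
      (d, v) := by
  have hA : Continuous fun q : (ι → ℝ) × (ι → ℝ) => Ω + Zᵀ * diagonal q.1 * Z :=
    continuous_const.add
      ((continuous_const.matrix_mul (continuous_fst.matrix_diagonal)).matrix_mul continuous_const)
  have hinv : ContinuousAt Inv.inv (Ω + Zᵀ * diagonal d * Z) := by
    refine continuousAt_matrix_inv _ ?_
    rw [Ring.inverse_eq_inv']
    exact continuousAt_inv₀ (hΩ.add_transpose_mul_diagonal_mul Z hd).det_pos.ne'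
  have hmulVec : Continuous fun w : Matrix κ κ ℝ × (κ → ℝ) => w.1 *ᵥ w.2 :=
    continuous_fst.matrix_mulVec continuous_snd
  have hinvA : ContinuousAt (fun q : (ι → ℝ) × (ι → ℝ) => (Ω + Zᵀ * diagonal q.1 * Z)⁻¹) (d, v) :=
    Tendsto.comp hinv hA.continuousAt
  exact hmulVec.continuousAt.comp
    (hinvA.prodMk (continuous_const.matrix_mulVec continuous_snd).continuousAt)

end Assembly

theorem tendsto_residual_of_tendsto_zero {f f' : ℝ → ℝ} {l : Filter ℝ} {y m : ℝ}
    (hf : Tendsto f l (𝓝 y)) (hf' : Tendsto f' l (𝓝 0))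
    (hmul : Tendsto (fun t => t * f' t) l (𝓝 0)) :
    Tendsto (fun t => y - f t + f' t * (t - m)) l (𝓝 0) := by
  have h := ((tendsto_const_nhds (x := y)).sub hf).add (hmul.sub (hf'.const_mul m))
  rw [sub_self, mul_zero, sub_self, add_zero] at h
  exact h.congr fun t => by ring

theorem exists_tendsto_diagonal_residual {f f' : ℝ → ℝ} (hf : Continuous f)
    (hf'_nonneg : ∀ x, 0 ≤ f' x) {l : Filter ℝ} {y : ℝ} (m : ℝ)
    (hcase : (∃ c : ℝ, l = 𝓝 c ∧ f c = y ∧ ContinuousAt f' c) ∨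
      ((l = atTop ∨ l = atBot) ∧ (¬∃ η : ℝ, f η = y) ∧
        Tendsto f l (𝓝 y) ∧ Tendsto f' l (𝓝 0) ∧ Tendsto (fun t => t * f' t) l (𝓝 0))) :
    ∃ d v : ℝ, 0 ≤ d ∧ Tendsto f' l (𝓝 d) ∧
      Tendsto (fun t => y - f t + f' t * (t - m)) l (𝓝 v) ∧
      ((¬∃ η : ℝ, f η = y) → d = 0 ∧ v = 0) := by
  rcases hcase with ⟨c, rfl, hc, hf'c⟩ | ⟨-, -, hfy, hf'0, hmul⟩
  · refine ⟨f' c, y - f c + f' c * (c - m), hf'_nonneg c, hf'c, ?_, fun h => (h ⟨c, hc⟩).elim⟩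
    exact (tendsto_const_nhds.sub hf.continuousAt).add
      (hf'c.mul (tendsto_id.sub tendsto_const_nhds))
  · exact ⟨0, 0, le_rfl, hf'0, tendsto_residual_of_tendsto_zero hfy hf'0 hmul,
      fun _ => ⟨rfl, rfl⟩⟩

theorem lambda_limit_exists_general
    (ni p r : ℕ)
    (y : Fin ni → ℝ)
    (X : Matrix (Fin ni) (Fin p) ℝ) (Z : Matrix (Fin ni) (Fin r) ℝ)
    (β : Fin p → ℝ)
    (Ω : Matrix (Fin r) (Fin r) ℝ) (hΩ : Ω.PosDef)
    (h1 h2 : Fin ni → ℝ → ℝ)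
    (hder : ∀ j x, HasDerivAt (h1 j) (h2 j x) x)
    (hnn : ∀ j x, 0 ≤ h2 j x)
    (F : Fin ni → Filter ℝ)
    (hcase : ∀ j,
      (∃ c : ℝ, F j = nhds c ∧ h1 j c = y j ∧ ContinuousAt (h2 j) c) ∨
      ((F j = atTop ∨ F j = atBot) ∧ (¬∃ η : ℝ, h1 j η = y j) ∧
        Tendsto (h1 j) (F j) (nhds (y j)) ∧ Tendsto (h2 j) (F j) (nhds 0) ∧
        Tendsto (fun t => t * h2 j t) (F j) (nhds 0)))
    (lam : (Fin ni → ℝ) → Fin r → ℝ)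
    (hlam : ∀ ηh, lam ηh
      = (Ω + Zᵀ * (Matrix.diagonal fun j => h2 j (ηh j)) * Z)⁻¹ *ᵥ
          (Zᵀ *ᵥ (y - (fun j => h1 j (ηh j))
            + (Matrix.diagonal fun j => h2 j (ηh j)) *ᵥ (ηh - X *ᵥ β)))) :
    (∃ l : Fin r → ℝ, Tendsto lam (Filter.pi F) (nhds l)) ∧
      ((∀ j, ¬∃ η : ℝ, h1 j η = y j) → Tendsto lam (Filter.pi F) (nhds 0)) := by
  choose d v hd_nonneg hd hv hdv_zero using fun j =>
    exists_tendsto_diagonal_residual (continuous_iff_continuousAt.mpr fun x =>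
      (hder j x).continuousAt) (hnn j) ((X *ᵥ β) j) (hcase j)
  set G := fun q : (Fin ni → ℝ) × (Fin ni → ℝ) => (Ω + Zᵀ * diagonal q.1 * Z)⁻¹ *ᵥ (Zᵀ *ᵥ q.2)
  have hlamG : lam = fun ηh => G ((fun j => h2 j (ηh j)),
      fun j => y j - h1 j (ηh j) + h2 j (ηh j) * (ηh j - (X *ᵥ β) j)) := by
    funext ηh
    simp only [hlam, G]
    congr 2
    funext j
    simp [mulVec_diagonal]
  have hargs : Tendsto (fun ηh : Fin ni → ℝ => ((fun j => h2 j (ηh j)),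
      fun j => y j - h1 j (ηh j) + h2 j (ηh j) * (ηh j - (X *ᵥ β) j))) (Filter.pi F) (𝓝 (d, v)) :=
    (tendsto_pi_nhds.mpr fun j => (hd j).comp (tendsto_eval_pi F j)).prodMk_nhds
      (tendsto_pi_nhds.mpr fun j => (hv j).comp (tendsto_eval_pi F j))
  have hlim : Tendsto lam (Filter.pi F) (𝓝 (G (d, v))) := hlamG ▸
    (continuousAt_inv_add_transpose_mul_diagonal_mul_mulVec hΩ Z hd_nonneg v).tendsto.comp hargs
  refine ⟨⟨_, hlim⟩, fun hno_mle => ?_⟩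
  have hd0 : d = 0 := funext fun j => (hdv_zero j (hno_mle j)).1
  have hv0 : v = 0 := funext fun j => (hdv_zero j (hno_mle j)).2
  simpa [G, hd0, hv0] using hlim

/-- **Existence of the limit of `λ_i` (Theorem 1).** In the GLMM with canonical link,
`h1 j = h_{ij}'` and `h2 j = h_{ij}'' ≥ 0` are the first and second derivatives of the
log-partition functions, `Λ_i(η̂) = (Ω + Z_iᵀ H_i(η̂) Z_i)⁻¹` and
`λ_i(η̂) = Λ_i(η̂) Z_iᵀ{ y_i − g_i(η̂) + H_i(η̂)(η̂ − X_i β) }`. For each `j`, the filter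
`F j` describes `η̂_{ij} → c_{ij}`: either the MLE exists (`c_{ij} ∈ ℝ` with
`h_{ij}'(c_{ij}) = y_{ij}`), or the MLE does not exist, `c_{ij} = ±∞`, and
`h_{ij}' → y_{ij}`, `h_{ij}'' → 0`, `η · h_{ij}''(η) → 0` along `F j` (Lemma 1).
Then the limit of `λ_i(η̂)` as `η̂ → c_i` exists; moreover, if the MLE does not exist
for every `j`, the limit is the zero vector. -/
theorem lambda_limit_exists
    (ni p r : ℕ)
    (y : Fin ni → ℝ)
    (X : Matrix (Fin ni) (Fin p) ℝ) (Z : Matrix (Fin ni) (Fin r) ℝ)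
    (β : Fin p → ℝ)
    (Ω : Matrix (Fin r) (Fin r) ℝ) (hΩsym : Ωᵀ = Ω) (hΩ : Ω.PosDef)
    (h1 h2 : Fin ni → ℝ → ℝ)
    (hder : ∀ j x, HasDerivAt (h1 j) (h2 j x) x)
    (hnn : ∀ j x, 0 ≤ h2 j x)
    (F : Fin ni → Filter ℝ) (hFne : ∀ j, (F j).NeBot)
    (hcase : ∀ j,
      (∃ c : ℝ, F j = nhds c ∧ h1 j c = y j ∧ ContinuousAt (h2 j) c) ∨
      ((F j = atTop ∨ F j = atBot) ∧ (¬∃ η : ℝ, h1 j η = y j) ∧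
        Tendsto (h1 j) (F j) (nhds (y j)) ∧ Tendsto (h2 j) (F j) (nhds 0) ∧
        Tendsto (fun t => t * h2 j t) (F j) (nhds 0)))
    (lam : (Fin ni → ℝ) → Fin r → ℝ)
    (hlam : ∀ ηh, lam ηh
      = (Ω + Zᵀ * (Matrix.diagonal fun j => h2 j (ηh j)) * Z)⁻¹ *ᵥ
          (Zᵀ *ᵥ (y - (fun j => h1 j (ηh j))
            + (Matrix.diagonal fun j => h2 j (ηh j)) *ᵥ (ηh - X *ᵥ β)))) :
    (∃ l : Fin r → ℝ, Tendsto lam (Filter.pi F) (nhds l)) ∧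
      ((∀ j, ¬∃ η : ℝ, h1 j η = y j) → Tendsto lam (Filter.pi F) (nhds 0)) :=
  lambda_limit_exists_general ni p r y X Z β Ω hΩ h1 h2 hder hnn F hcase lam hlam
end

section
/- (Binomial GLMM with logit link.) Fix n_i ≥ 1, an n_i × p matrix X_i, an n_i × r matrix Z_i, β ∈ ℝ^p, a symmetric positive definite r × r matrix Ω, and positive integers m_{i1}, …, m_{in_i}. For the binomial model with logit link, h_{ij}(η) = m_{ij} log(1 + exp(η)), so h_{ij}'(η) = m_{ij} exp(η)/(1+exp(η)) and h_{ij}''(η) = m_{ij} exp(η)/(1+exp(η))². Define g_i, H_i componentwise from h_{ij}', h_{ij}'', and Λ_i(η̂) = (Ω + Z_i^T H_i(η̂) Z_i)^{−1}, λ_i(η̂) = Λ_i(η̂) Z_i^T { y_i − g_i(η̂) + H_i(η̂)(η̂ − X_i β) }. Suppose every entry of y_i is either 0 or m_{ij}. Then λ_i(η̂) → 0 as, for each j, η̂_{ij} → −∞ if y_{ij} = 0 and η̂_{ij} → +∞ if y_{ij} = m_{ij}. -/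
open Matrix Filter Topology

/-! With `σ` the logistic function, `h'(η) = m σ(η)` and `h''(η) = m σ(η) σ(-η)`. In the
prescribed directions `y - m σ(η) → 0`, while `h''(η) ≤ m e^{-|η|}` beats the linear growth of
`η - Xβ`; so the working vector `y - g + H (η - Xβ)` and the matrix `H` both tend to `0`. Hence
`Ω + Zᵀ H Z → Ω`, which is invertible, and `λ → Ω⁻¹ 0 = 0`. -/

namespace Real

lemma exp_div_one_add_exp (x : ℝ) : exp x / (1 + exp x) = sigmoid x := by
  rw [sigmoid_def, exp_neg]
  field_simp
  ring

lemma exp_div_one_add_exp_sq (x : ℝ) :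
    exp x / (1 + exp x) ^ 2 = sigmoid x * sigmoid (-x) := by
  rw [← sigmoid_mul_rexp_neg, ← exp_div_one_add_exp, exp_neg]
  field_simp

lemma tendsto_mul_sigmoid_atBot : Tendsto (fun x => x * sigmoid x) atBot (𝓝 0) := by
  have hexp : Tendsto (fun x => |x| * exp x) atBot (𝓝 0) := by
    have := (tendsto_pow_mul_exp_neg_atTop_nhds_zero 1).comp tendsto_neg_atBot_atTop
    refine this.congr' ?_
    filter_upwards [eventually_le_atBot 0] with x hx
    simp [abs_of_nonpos hx]
  refine squeeze_zero_norm (fun x => ?_) hexp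
  rw [norm_mul, Real.norm_eq_abs, Real.norm_of_nonneg (sigmoid_nonneg x), ← exp_div_one_add_exp]
  gcongr
  exact div_le_self (exp_pos x).le (le_add_of_nonneg_right (exp_pos x).le)

lemma tendsto_sub_mul_sigmoid_mul_sigmoid_neg_atBot (d : ℝ) :
    Tendsto (fun x => (x - d) * (sigmoid x * sigmoid (-x))) atBot (𝓝 0) := by
  have h := ((tendsto_mul_sigmoid_atBot.sub (tendsto_sigmoid_atBot.const_mul d)).mul
    (tendsto_sigmoid_atTop.comp tendsto_neg_atBot_atTop))
  simp only [mul_zero, sub_zero, zero_mul] at h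
  exact h.congr fun x => by simp only [Function.comp_apply]; ring

lemma tendsto_sub_mul_sigmoid_mul_sigmoid_neg_atTop (d : ℝ) :
    Tendsto (fun x => (x - d) * (sigmoid x * sigmoid (-x))) atTop (𝓝 0) := by
  -- `x ↦ σ x σ (-x)` is even, so this is the `atBot` statement for `-d`.
  have h := ((tendsto_sub_mul_sigmoid_mul_sigmoid_neg_atBot (-d)).comp
    tendsto_neg_atTop_atBot).neg
  rw [neg_zero] at h
  exact h.congr fun x => by simp only [Function.comp_apply, neg_neg]; ring

end Real

open Real

lemma tendsto_binomial_weight (c : ℝ) {F : Filter ℝ} (hF : F = atBot ∨ F = atTop) :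
    Tendsto (fun t => c * exp t / (1 + exp t) ^ 2) F (𝓝 0) := by
  simp_rw [mul_div_assoc, exp_div_one_add_exp_sq]
  rcases hF with rfl | rfl
  · simpa using (tendsto_sigmoid_atBot.mul
      (tendsto_sigmoid_atTop.comp tendsto_neg_atBot_atTop)).const_mul c
  · simpa using (tendsto_sigmoid_atTop.mul
      (tendsto_sigmoid_atBot.comp tendsto_neg_atTop_atBot)).const_mul c

lemma tendsto_binomial_working_residual (c d y : ℝ) {F : Filter ℝ}
    (h : (y = 0 ∧ F = atBot) ∨ (y = c ∧ F = atTop)) :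
    Tendsto (fun t => y - c * exp t / (1 + exp t) + c * exp t / (1 + exp t) ^ 2 * (t - d))
      F (𝓝 0) := by
  simp_rw [mul_div_assoc, exp_div_one_add_exp, exp_div_one_add_exp_sq]
  rcases h with ⟨rfl, rfl⟩ | ⟨rfl, rfl⟩
  · have h := ((tendsto_sigmoid_atBot.const_mul c).const_sub 0).add
      ((tendsto_sub_mul_sigmoid_mul_sigmoid_neg_atBot d).const_mul c)
    simp only [mul_zero, sub_zero, add_zero] at h
    exact h.congr fun t => by ring
  · have h := ((tendsto_sigmoid_atTop.const_mul y).const_sub y).add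
      ((tendsto_sub_mul_sigmoid_mul_sigmoid_neg_atTop d).const_mul y)
    simp only [mul_one, sub_self, mul_zero, add_zero] at h
    exact h.congr fun t => by ring

lemma Matrix.tendsto_inv_add_mulVec_zero {α ι 𝕜 : Type*} [Fintype ι] [DecidableEq ι]
    [NormedField 𝕜] {l : Filter α} {Ω : Matrix ι ι 𝕜} (hΩ : Ω.det ≠ 0)
    {A : α → Matrix ι ι 𝕜} {v : α → ι → 𝕜}
    (hA : Tendsto A l (𝓝 0)) (hv : Tendsto v l (𝓝 0)) :
    Tendsto (fun a => (Ω + A a)⁻¹ *ᵥ v a) l (𝓝 0) := by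
  have hinv : ContinuousAt Inv.inv Ω :=
    continuousAt_matrix_inv Ω (by rw [Ring.inverse_eq_inv']; exact continuousAt_inv₀ hΩ)
  have hsum : Tendsto (fun a => Ω + A a) l (𝓝 Ω) := by
    simpa using tendsto_const_nhds.add hA
  have hΩA : Tendsto (fun a => (Ω + A a)⁻¹) l (𝓝 Ω⁻¹) := hinv.tendsto.comp hsum
  have h := ((continuous_fst.matrix_mulVec continuous_snd).tendsto (Ω⁻¹, (0 : ι → 𝕜))).comp
    (hΩA.prodMk_nhds hv)
  rwa [mulVec_zero] at h

theorem binomial_lambda_limit_zero_general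
    (ni p r : ℕ)
    (X : Matrix (Fin ni) (Fin p) ℝ) (Z : Matrix (Fin ni) (Fin r) ℝ)
    (β : Fin p → ℝ)
    (Ω : Matrix (Fin r) (Fin r) ℝ) (hΩ : Ω.PosDef)
    (m : Fin ni → ℕ)
    (y : Fin ni → ℝ)
    (g : (Fin ni → ℝ) → Fin ni → ℝ)
    (hg : ∀ η j, g η j = (m j : ℝ) * Real.exp (η j) / (1 + Real.exp (η j)))
    (H : (Fin ni → ℝ) → Matrix (Fin ni) (Fin ni) ℝ)
    (hH : ∀ η, H η
      = Matrix.diagonal fun j => (m j : ℝ) * Real.exp (η j) / (1 + Real.exp (η j)) ^ 2)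
    (lam : (Fin ni → ℝ) → Fin r → ℝ)
    (hlam : ∀ ηh, lam ηh
      = (Ω + Zᵀ * H ηh * Z)⁻¹ *ᵥ (Zᵀ *ᵥ (y - g ηh + H ηh *ᵥ (ηh - X *ᵥ β))))
    (F : Fin ni → Filter ℝ)
    (hF : ∀ j, (y j = 0 ∧ F j = atBot) ∨ (y j = (m j : ℝ) ∧ F j = atTop)) :
    Tendsto lam (Filter.pi F) (nhds 0) := by
  have hH0 : Tendsto H (Filter.pi F) (𝓝 0) := by
    have hweight : Tendsto (fun η (j : Fin ni) => (m j : ℝ) * exp (η j) / (1 + exp (η j)) ^ 2)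
        (Filter.pi F) (𝓝 0) := tendsto_pi_nhds.2 fun j =>
      (tendsto_binomial_weight _ (by rcases hF j with ⟨-, h⟩ | ⟨-, h⟩ <;> simp [h])).comp
        (tendsto_eval_pi F j)
    simpa [funext hH, Function.comp_def] using
      (continuous_id.matrix_diagonal.tendsto 0).comp hweight
  have hres : Tendsto (fun η => y - g η + H η *ᵥ (η - X *ᵥ β)) (Filter.pi F) (𝓝 0) :=
    tendsto_pi_nhds.2 fun j =>
      ((tendsto_binomial_working_residual _ ((X *ᵥ β) j) _ (hF j)).comp
        (tendsto_eval_pi F j)).congr fun η => by simp [hg, hH, mulVec_diagonal]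
  have hZHZ : Tendsto (fun η => Zᵀ * H η * Z) (Filter.pi F) (𝓝 0) := by
    simpa [Function.comp_def] using (((continuous_const.matrix_mul continuous_id).matrix_mul
      continuous_const).tendsto 0).comp hH0
  have hZres : Tendsto (fun η => Zᵀ *ᵥ (y - g η + H η *ᵥ (η - X *ᵥ β))) (Filter.pi F) (𝓝 0) := by
    simpa [Function.comp_def] using
      ((continuous_const.matrix_mulVec continuous_id).tendsto 0).comp hres
  simpa [funext hlam] using tendsto_inv_add_mulVec_zero hΩ.det_pos.ne' hZHZ hZres

/-- **Noncentering limit for the binomial GLMM with logit link (Corollary 1(ii)).**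
For the binomial model, `h_{ij}(η) = m_{ij} log(1 + exp(η))`, so
`h_{ij}'(η) = m_{ij} e^η/(1+e^η)` and `h_{ij}''(η) = m_{ij} e^η/(1+e^η)²`. With
`Λ_i(η̂) = (Ω + Z_iᵀ H_i(η̂) Z_i)⁻¹` and
`λ_i(η̂) = Λ_i(η̂) Z_iᵀ{ y_i − g_i(η̂) + H_i(η̂)(η̂ − X_i β) }`, if every entry of `y_i`
is `0` or `m_{ij}`, then `λ_i(η̂) → 0` as, for each `j`, `η̂_{ij} → −∞` if `y_{ij} = 0`
and `η̂_{ij} → +∞` if `y_{ij} = m_{ij}`. -/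
theorem binomial_lambda_limit_zero
    (ni p r : ℕ) (hni : 1 ≤ ni)
    (X : Matrix (Fin ni) (Fin p) ℝ) (Z : Matrix (Fin ni) (Fin r) ℝ)
    (β : Fin p → ℝ)
    (Ω : Matrix (Fin r) (Fin r) ℝ) (hΩsym : Ωᵀ = Ω) (hΩ : Ω.PosDef)
    (m : Fin ni → ℕ) (hm : ∀ j, 0 < m j)
    (y : Fin ni → ℝ)
    (g : (Fin ni → ℝ) → Fin ni → ℝ)
    (hg : ∀ η j, g η j = (m j : ℝ) * Real.exp (η j) / (1 + Real.exp (η j)))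
    (H : (Fin ni → ℝ) → Matrix (Fin ni) (Fin ni) ℝ)
    (hH : ∀ η, H η
      = Matrix.diagonal fun j => (m j : ℝ) * Real.exp (η j) / (1 + Real.exp (η j)) ^ 2)
    (lam : (Fin ni → ℝ) → Fin r → ℝ)
    (hlam : ∀ ηh, lam ηh
      = (Ω + Zᵀ * H ηh * Z)⁻¹ *ᵥ (Zᵀ *ᵥ (y - g ηh + H ηh *ᵥ (ηh - X *ᵥ β))))
    (F : Fin ni → Filter ℝ)
    (hF : ∀ j, (y j = 0 ∧ F j = atBot) ∨ (y j = (m j : ℝ) ∧ F j = atTop)) :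
    Tendsto lam (Filter.pi F) (nhds 0) :=
  binomial_lambda_limit_zero_general ni p r X Z β Ω hΩ m y g hg H hH lam hlam F hF
end

section
/- Consider a hierarchical model with joint density p(y, θ) = p(θ_G) ∏_{i=1}^n p(b_i|θ_G) p(y_i|b_i, θ_G), reparametrized via b_i = L_i b̃_i + λ_i, where for each i, λ_i(θ_G) ∈ ℝ^r and the r × r lower-triangular positive-diagonal matrix L_i(θ_G) are differentiable in θ_G, and Λ_i = L_i L_i^T. Let ℓ(θ̃) = log p(θ_G) + Σ_{i=1}^n { log p(y_i, b_i|θ_G) + log|L_i| }, a_i = ∇_{b_i} log p(y_i, b_i|θ_G), B_i = L_i^T a_i b̃_i^T, and B̃_i = B̄_i + B̄_i^T − dg(B_i). Suppose θ_G is partitioned as (θ_{G_1}, …, θ_{G_M}). Then for each m = 1, …, M, ∇_{θ_{G_m}} ℓ(θ̃) = Σ_{i=1}^n (∇_{θ_{G_m}} λ_i) a_i + (1/2) Σ_{i=1}^n {∇_{θ_{G_m}} vec(Λ_i)} vec(Λ_i^{−1} + L_i^{−T} B̃_i L_i^{−1}) + Σ_{i=1}^n ∇_{θ_{G_m}} log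 p(y_i, b_i|θ_G) + ∇_{θ_{G_m}} log p(θ_G), where ∇_{θ_{G_m}} λ_i and ∇_{θ_{G_m}} vec(Λ_i) denote the (transposed) Jacobian matrices and the last two gradients are partial derivatives holding b_i fixed. -/
open Matrix

attribute [local instance] Matrix.normedAddCommGroup Matrix.normedSpace

/-- The continuous linear map `v ↦ a ⬝ᵥ v`. -/
noncomputable def dotCLM {ι : Type*} [Fintype ι] (a : ι → ℝ) : (ι → ℝ) →L[ℝ] ℝ :=
  LinearMap.toContinuousLinearMap
    { toFun := fun v => a ⬝ᵥ v
      map_add' := fun x y => dotProduct_add a x y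
      map_smul' := fun c x => by simp [dotProduct_smul] }

/-- The continuous linear map `v ↦ M *ᵥ v`. -/
noncomputable def mulVecCLM {ι κ : Type*} [Fintype ι] [Fintype κ]
    (M : Matrix κ ι ℝ) : (ι → ℝ) →L[ℝ] (κ → ℝ) :=
  LinearMap.toContinuousLinearMap M.mulVecLin

/-- Column-stacking vectorization `vec(A)`, indexed by pairs `(column, row)`. -/
def vecm {r : ℕ} (A : Matrix (Fin r) (Fin r) ℝ) : Fin r × Fin r → ℝ := fun q => A q.2 q.1

/-- Lower-triangular truncation `Ā` of a square matrix. -/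
def ltri {r : ℕ} (A : Matrix (Fin r) (Fin r) ℝ) : Matrix (Fin r) (Fin r) ℝ :=
  fun i j => if j ≤ i then A i j else 0

/-! Along a direction `v`, the chain rule through `b_i = L_i b̃_i + λ_i` gives
`a_iᵀ (M b̃_i + dλ_i)` with `M = dL_i(v)`, and `log |L_i| = Σ_j log L_i,jj` gives
`Σ_j M_jj / L_i,jj`.
The derivative `M` is again lower triangular and `dΛ_i = M L_iᵀ + L_i Mᵀ`. Since
`C = Λ_i⁻¹ + L_i⁻ᵀ B̃_i L_i⁻¹` is symmetric, `⟪vec C, vec dΛ_i⟫ = 2 tr(L_iᵀ C M)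
= 2 tr(L_i⁻¹ M) + 2 tr(B̃_i L_i⁻¹ M)`. The first trace is `Σ_j M_jj / L_i,jj` because `L_i⁻¹ M` is
lower triangular, and in the second only the upper triangle of `B̃_i`, which is that of `B_iᵀ`,
meets `L_i⁻¹ M`, so it equals `tr(B_iᵀ L_i⁻¹ M) = a_iᵀ M b̃_i`. -/

@[simp] lemma dotCLM_apply {ι : Type*} [Fintype ι] (a v : ι → ℝ) : dotCLM a v = a ⬝ᵥ v := rfl

@[simp] lemma mulVecCLM_apply {ι κ : Type*} [Fintype ι] [Fintype κ] (M : Matrix κ ι ℝ)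
    (v : ι → ℝ) : mulVecCLM M v = M *ᵥ v := rfl

namespace Matrix

variable {m R : Type*} [Fintype m]

theorem IsSymm.trace_mul_add_transpose [CommSemiring R] {A : Matrix m m R} (hA : A.IsSymm)
    (X : Matrix m m R) : trace (A * (X + Xᵀ)) = 2 * trace (A * X) := by
  have hXt : trace (A * Xᵀ) = trace (A * X) := by
    rw [← trace_transpose, transpose_mul, transpose_transpose, trace_mul_comm, hA.eq]
  rw [mul_add, trace_add, hXt, two_mul]

variable [LinearOrder m]

theorem IsLowerTriangular.mul_apply_self [NonUnitalNonAssocSemiring R] {A B : Matrix m m R}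
    (hA : A.IsLowerTriangular) (hB : B.IsLowerTriangular) (i : m) :
    (A * B) i i = A i i * B i i := by
  refine (mul_apply ..).trans (Finset.sum_eq_single i (fun k _ hki => ?_) (by simp))
  rcases hki.lt_or_gt with h | h
  · rw [hB (OrderDual.toDual_lt_toDual.2 h), mul_zero]
  · rw [hA (OrderDual.toDual_lt_toDual.2 h), zero_mul]

theorem IsLowerTriangular.trace_mul_congr [NonUnitalNonAssocSemiring R] {X Y N : Matrix m m R}
    (hN : N.IsLowerTriangular) (hXY : ∀ j k, j ≤ k → X j k = Y j k) :
    trace (X * N) = trace (Y * N) := by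
  refine Finset.sum_congr rfl fun j _ => Finset.sum_congr rfl fun k _ => ?_
  change X j k * N k j = Y j k * N k j
  rcases le_or_gt j k with h | h
  · rw [hXY j k h]
  · rw [hN (OrderDual.toDual_lt_toDual.2 h), mul_zero, mul_zero]

variable {K : Type*} [Field K] {L : Matrix m m K}

theorem IsLowerTriangular.isUnit_det (hL : L.IsLowerTriangular) (hdiag : ∀ i, L i i ≠ 0) :
    IsUnit L.det := by
  rw [det_of_isLowerTriangular L hL]
  exact (Finset.prod_ne_zero_iff.2 fun i _ => hdiag i).isUnit

theorem IsLowerTriangular.inv (hL : L.IsLowerTriangular) (hdiag : ∀ i, L i i ≠ 0) :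
    L⁻¹.IsLowerTriangular :=
  have : Invertible L := invertibleOfIsUnitDet L (hL.isUnit_det hdiag)
  blockTriangular_inv_of_blockTriangular hL

theorem IsLowerTriangular.inv_apply_self (hL : L.IsLowerTriangular) (hdiag : ∀ i, L i i ≠ 0)
    (i : m) : L⁻¹ i i = (L i i)⁻¹ := by
  have h := congr_fun₂ (nonsing_inv_mul L (hL.isUnit_det hdiag)) i i
  rw [(hL.inv hdiag).mul_apply_self hL, one_apply_eq] at h
  exact eq_inv_of_mul_eq_one_left h

theorem IsLowerTriangular.trace_inv_mul (hL : L.IsLowerTriangular) (hdiag : ∀ i, L i i ≠ 0)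
    {M : Matrix m m K} (hM : M.IsLowerTriangular) : trace (L⁻¹ * M) = ∑ j, M j j / L j j := by
  refine Finset.sum_congr rfl fun j _ => ?_
  rw [diag_apply, (hL.inv hdiag).mul_apply_self hM,
    hL.inv_apply_self hdiag, inv_mul_eq_div]

end Matrix

section Vectorization

variable {r : ℕ}

theorem vecm_dotProduct_vecm (A X : Matrix (Fin r) (Fin r) ℝ) :
    vecm A ⬝ᵥ vecm X = trace (Aᵀ * X) := by
  simp only [vecm, dotProduct, trace, diag, mul_apply, transpose_apply, Fintype.sum_prod_type]

theorem isSymm_ltri_add_transpose_sub_diagonal (B : Matrix (Fin r) (Fin r) ℝ) :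
    (ltri B + (ltri B)ᵀ - diagonal fun j => B j j).IsSymm := by
  rw [IsSymm, transpose_sub, transpose_add, transpose_transpose, diagonal_transpose,
    add_comm (ltri B)ᵀ]

theorem ltri_add_transpose_sub_diagonal_apply_of_le (B : Matrix (Fin r) (Fin r) ℝ)
    {j k : Fin r} (hjk : j ≤ k) : (ltri B + (ltri B)ᵀ - diagonal fun j => B j j) j k = B k j := by
  rcases hjk.lt_or_eq with h | rfl
  · simp [ltri, h.ne, h.not_ge, hjk]
  · simp [ltri]

theorem trace_ltri_add_transpose_sub_diagonal_mul (B : Matrix (Fin r) (Fin r) ℝ)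
    {N : Matrix (Fin r) (Fin r) ℝ} (hN : N.IsLowerTriangular) :
    trace ((ltri B + (ltri B)ᵀ - diagonal fun j => B j j) * N) = trace (Bᵀ * N) :=
  hN.trace_mul_congr fun _ _ => ltri_add_transpose_sub_diagonal_apply_of_le B

theorem vecm_dotProduct_vecm_mul_transpose_add {L M B : Matrix (Fin r) (Fin r) ℝ}
    {a b : Fin r → ℝ} (hL : L.IsLowerTriangular) (hdiag : ∀ j, L j j ≠ 0)
    (hM : M.IsLowerTriangular) (hB : B = vecMulVec (Lᵀ *ᵥ a) b) :
    vecm ((L * Lᵀ)⁻¹ + (L⁻¹)ᵀ * (ltri B + (ltri B)ᵀ - diagonal fun j => B j j) * L⁻¹)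
        ⬝ᵥ vecm (M * Lᵀ + L * Mᵀ)
      = 2 * (a ⬝ᵥ M *ᵥ b + ∑ j, M j j / L j j) := by
  set S := ltri B + (ltri B)ᵀ - diagonal fun j => B j j
  set C := (L * Lᵀ)⁻¹ + (L⁻¹)ᵀ * S * L⁻¹
  have hdet := hL.isUnit_det hdiag
  have hC : C.IsSymm := (isSymm_mul_transpose_self L).inv.add <| by
    rw [IsSymm, transpose_mul, transpose_mul, transpose_transpose,
      (isSymm_ltri_add_transpose_sub_diagonal B).eq, mul_assoc]
  have hLC : Lᵀ * C = L⁻¹ + S * L⁻¹ := by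
    rw [mul_add, Matrix.mul_inv_rev, ← mul_assoc, mul_nonsing_inv _ (by rwa [det_transpose]),
      one_mul, ← mul_assoc, ← mul_assoc, ← transpose_mul, nonsing_inv_mul _ hdet, transpose_one,
      one_mul]
  have hS : trace (S * (L⁻¹ * M)) = a ⬝ᵥ M *ᵥ b := by
    rw [trace_ltri_add_transpose_sub_diagonal_mul B ((hL.inv hdiag).mul hM), hB,
      transpose_vecMulVec, vecMulVec_mul, trace_vecMulVec, mulVec_transpose, vecMul_vecMul,
      mul_nonsing_inv_cancel_left _ _ hdet, dotProduct_comm, dotProduct_mulVec]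
  calc vecm C ⬝ᵥ vecm (M * Lᵀ + L * Mᵀ) = trace (C * (M * Lᵀ + (M * Lᵀ)ᵀ)) := by
        rw [vecm_dotProduct_vecm, hC.eq, transpose_mul, transpose_transpose]
    _ = 2 * trace (Lᵀ * C * M) := by
        rw [hC.trace_mul_add_transpose, ← mul_assoc, trace_mul_comm, mul_assoc]
    _ = 2 * (trace (L⁻¹ * M) + trace (S * (L⁻¹ * M))) := by
        rw [hLC, add_mul, trace_add, mul_assoc]
    _ = 2 * (a ⬝ᵥ M *ᵥ b + ∑ j, M j j / L j j) := by
        rw [hL.trace_inv_mul hdiag hM, hS, add_comm]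

end Vectorization

section Calculus

variable {E m : Type*} [NormedAddCommGroup E] [NormedSpace ℝ E] [Fintype m]
  {F : E → Matrix m m ℝ} {Φ : E →L[ℝ] Matrix m m ℝ} {x : E}

theorem HasFDerivAt.matrix_apply (hF : HasFDerivAt F Φ x) (j k : m) :
    HasFDerivAt (fun t => F t j k)
      ((entryLinearMap ℝ ℝ j k).toContinuousLinearMap.comp Φ) x :=
  (entryLinearMap ℝ ℝ j k).toContinuousLinearMap.hasFDerivAt.comp x hF

theorem HasFDerivAt.blockTriangular_apply {α : Type*} [LT α] {b : m → α}
    (hF : HasFDerivAt F Φ x) (hb : ∀ t, (F t).BlockTriangular b) (v : E) :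
    (Φ v).BlockTriangular b := fun j k hjk => by
  have h := hF.matrix_apply j k
  rw [show (fun t => F t j k) = fun _ => 0 from funext fun t => hb t hjk] at h
  simpa using congr($(h.unique (hasFDerivAt_const 0 x)) v)

theorem HasFDerivAt.mul_transpose_apply_eq (hF : HasFDerivAt F Φ x) {j k : m} {ψ : E →L[ℝ] ℝ}
    (hψ : HasFDerivAt (fun t => (F t * (F t)ᵀ) j k) ψ x) (v : E) :
    ψ v = (Φ v * (F x)ᵀ + F x * (Φ v)ᵀ) j k := by
  have hsum := HasFDerivAt.fun_sum (u := Finset.univ) fun s _ =>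
    (hF.matrix_apply j s).mul (hF.matrix_apply k s)
  rw [hψ.unique hsum]
  simp [mul_apply, Finset.sum_add_distrib, mul_comm, add_comm]

theorem HasFDerivAt.log_abs_det_of_isLowerTriangular [LinearOrder m] (hF : HasFDerivAt F Φ x)
    (hlow : ∀ t, (F t).IsLowerTriangular) (hdiag : ∀ t j, F t j j ≠ 0) :
    HasFDerivAt (fun t => Real.log |(F t).det|)
      (∑ j, (F x j j)⁻¹ • (entryLinearMap ℝ ℝ j j).toContinuousLinearMap.comp Φ) x := by
  have hlog : (fun t => Real.log |(F t).det|) = fun t => ∑ j, Real.log (F t j j) :=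
    funext fun t => by
      rw [det_of_isLowerTriangular _ (hlow t), Finset.abs_prod,
        Real.log_prod fun j _ => abs_ne_zero.2 (hdiag t j)]
      simp only [Real.log_abs]
  rw [hlog]
  exact HasFDerivAt.fun_sum fun j _ => (hF.matrix_apply j j).log (hdiag x j)

end Calculus

theorem hasFDerivAt_log_joint_reparam_add_log_abs_det {ι : Type*} [Fintype ι] {r : ℕ}
    {logp : (ι → ℝ) → (Fin r → ℝ) → ℝ} {L : (ι → ℝ) → Matrix (Fin r) (Fin r) ℝ}
    {lam : (ι → ℝ) → Fin r → ℝ} {btil : Fin r → ℝ} {t0 : ι → ℝ}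
    {Dlam : Matrix ι (Fin r) ℝ} {DvecLam : Matrix ι (Fin r × Fin r) ℝ} {a : Fin r → ℝ}
    {Dθ : ι → ℝ} {B : Matrix (Fin r) (Fin r) ℝ}
    (hLlow : ∀ t, (L t).IsLowerTriangular) (hLdiag : ∀ t j, L t j j ≠ 0)
    (hL : DifferentiableAt ℝ L t0) (hlam : HasFDerivAt lam (mulVecCLM Dlamᵀ) t0)
    (hLam : HasFDerivAt (fun t => vecm (L t * (L t)ᵀ)) (mulVecCLM DvecLamᵀ) t0)
    (hlogp : HasFDerivAt (fun q : (ι → ℝ) × (Fin r → ℝ) => logp q.1 q.2)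
      ((dotCLM Dθ).comp (ContinuousLinearMap.fst ℝ (ι → ℝ) (Fin r → ℝ))
        + (dotCLM a).comp (ContinuousLinearMap.snd ℝ (ι → ℝ) (Fin r → ℝ)))
      (t0, L t0 *ᵥ btil + lam t0))
    (hB : B = vecMulVec ((L t0)ᵀ *ᵥ a) btil) :
    HasFDerivAt (fun t => logp t (L t *ᵥ btil + lam t) + Real.log |(L t).det|)
      (dotCLM (Dlam *ᵥ a
        + (1 / 2 : ℝ) • DvecLam *ᵥ vecm ((L t0 * (L t0)ᵀ)⁻¹
            + ((L t0)⁻¹)ᵀ * (ltri B + (ltri B)ᵀ - diagonal fun j => B j j) * (L t0)⁻¹)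
        + Dθ)) t0 := by
  have hΦ := hL.hasFDerivAt
  set Φ := fderiv ℝ L t0
  have hΛ (v : ι → ℝ) : DvecLamᵀ *ᵥ v = vecm (Φ v * (L t0)ᵀ + L t0 * (Φ v)ᵀ) :=
    funext fun q => hΦ.mul_transpose_apply_eq (hasFDerivAt_pi'.1 hLam q) v
  have hb : HasFDerivAt (fun t => L t *ᵥ btil + lam t)
      (((mulVecBilin ℝ ℝ).flip btil).toContinuousLinearMap.comp Φ + mulVecCLM Dlamᵀ) t0 := by
    exact (((mulVecBilin ℝ ℝ).flip btil).toContinuousLinearMap.hasFDerivAt.comp t0 hΦ).add hlam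
  refine ((hlogp.comp t0 ((hasFDerivAt_id t0).prodMk hb)).add
    (hΦ.log_abs_det_of_isLowerTriangular hLlow hLdiag)).congr_fderiv
    (ContinuousLinearMap.ext fun v => ?_)
  have hC := vecm_dotProduct_vecm_mul_transpose_add (hLlow t0) (hLdiag t0)
    (hΦ.blockTriangular_apply hLlow v) hB
  simp only [ContinuousLinearMap.add_comp, _root_.add_apply, ContinuousLinearMap.comp_apply,
    ContinuousLinearMap.prod_apply, ContinuousLinearMap.id_apply,
    LinearMap.coe_toContinuousLinearMap', LinearMap.flip_apply, mulVecBilin_apply,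
    mulVecCLM_apply, ContinuousLinearMap.coe_fst',
    dotCLM_apply, ContinuousLinearMap.coe_snd', dotProduct_add, _root_.sum_apply, _root_.smul_apply,
    entryLinearMap_apply, smul_eq_mul, one_div, add_dotProduct, smul_dotProduct]
  rw [dotProduct_comm (Dlam *ᵥ a), ← dotProduct_transpose_mulVec Dlam,
    dotProduct_comm (DvecLam *ᵥ _), ← dotProduct_transpose_mulVec DvecLam, hΛ, hC]
  simp only [div_eq_inv_mul]
  ring

/-- Here `t` ranges over the block `θ_{G_m}` with the other blocks held fixed, `logprior t` is
`log p(θ_G)`, `logp i t b` is `log p(y_i, b|θ_G)`, `Lmat t i = L_i`, `lam t i = λ_i`,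
`Lam t i = Λ_i`; `Dlam i`, `DvecLam i`, `Dθ i`, `gp` are the gradients `∇λ_i`, `∇vec(Λ_i)`,
`∇_{θ_{G_m}} log p(y_i, b_i|θ_G)`, `∇ log p(θ_G)`, and `a i`, `B i`, `Btil i` are `a_i`, `B_i`,
`B̃_i`. -/
theorem gradient_reparametrized_log_joint_global
    (n r gm : ℕ)
    (logprior : (Fin gm → ℝ) → ℝ)
    (logp : Fin n → (Fin gm → ℝ) → (Fin r → ℝ) → ℝ)
    (Lmat : (Fin gm → ℝ) → Fin n → Matrix (Fin r) (Fin r) ℝ)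
    (lam : (Fin gm → ℝ) → Fin n → Fin r → ℝ)
    (Lam : (Fin gm → ℝ) → Fin n → Matrix (Fin r) (Fin r) ℝ)
    (hLlow : ∀ t i, ∀ j k : Fin r, j < k → Lmat t i j k = 0)
    (hLdiag : ∀ t i, ∀ j : Fin r, 0 < Lmat t i j j)
    (hLam : ∀ t i, Lam t i = Lmat t i * (Lmat t i)ᵀ)
    (btil : Fin n → Fin r → ℝ)
    (t0 : Fin gm → ℝ)
    (b0 : Fin n → Fin r → ℝ)
    (hb0 : ∀ i, b0 i = Lmat t0 i *ᵥ btil i + lam t0 i)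
    (hLdiff : ∀ i, DifferentiableAt ℝ (fun t => Lmat t i) t0)
    (Dlam : Fin n → Matrix (Fin gm) (Fin r) ℝ)
    (hlamD : ∀ i, HasFDerivAt (fun t => lam t i) (mulVecCLM (Dlam i)ᵀ) t0)
    (DvecLam : Fin n → Matrix (Fin gm) (Fin r × Fin r) ℝ)
    (hLamD : ∀ i, HasFDerivAt (fun t => vecm (Lam t i)) (mulVecCLM (DvecLam i)ᵀ) t0)
    (a : Fin n → Fin r → ℝ) (Dθ : Fin n → Fin gm → ℝ)
    (hlogp : ∀ i, HasFDerivAt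
      (fun q : (Fin gm → ℝ) × (Fin r → ℝ) => logp i q.1 q.2)
      ((dotCLM (Dθ i)).comp (ContinuousLinearMap.fst ℝ (Fin gm → ℝ) (Fin r → ℝ))
        + (dotCLM (a i)).comp (ContinuousLinearMap.snd ℝ (Fin gm → ℝ) (Fin r → ℝ)))
      (t0, b0 i))
    (gp : Fin gm → ℝ)
    (hprior : HasFDerivAt logprior (dotCLM gp) t0)
    (B Btil : Fin n → Matrix (Fin r) (Fin r) ℝ)
    (hB : ∀ i, B i = Matrix.vecMulVec ((Lmat t0 i)ᵀ *ᵥ a i) (btil i))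
    (hBtil : ∀ i, Btil i = ltri (B i) + (ltri (B i))ᵀ
      - Matrix.diagonal (fun j => B i j j)) :
    HasFDerivAt
      (fun t : Fin gm → ℝ => logprior t
        + ∑ i, (logp i t (Lmat t i *ᵥ btil i + lam t i) + Real.log |(Lmat t i).det|))
      (dotCLM ((∑ i, Dlam i *ᵥ a i)
        + (1 / 2 : ℝ) • (∑ i, DvecLam i *ᵥ
            vecm ((Lam t0 i)⁻¹ + ((Lmat t0 i)⁻¹)ᵀ * Btil i * (Lmat t0 i)⁻¹))
        + (∑ i, Dθ i) + gp))
      t0 := by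
  have hunit (i : Fin n) := hasFDerivAt_log_joint_reparam_add_log_abs_det (logp := logp i)
    (fun t j k hjk => hLlow t i j k (OrderDual.toDual_lt_toDual.1 hjk))
    (fun t j => (hLdiag t i j).ne')
    (hLdiff i) (hlamD i) (by simpa only [hLam] using hLamD i) (hb0 i ▸ hlogp i) (hB i)
  refine (hprior.add (HasFDerivAt.fun_sum fun i _ => hunit i)).congr_fderiv
    (ContinuousLinearMap.ext fun v => ?_)
  simp only [hLam, hBtil, _root_.add_apply, _root_.sum_apply, dotCLM_apply, add_dotProduct,
    sum_dotProduct, smul_dotProduct, smul_eq_mul, Finset.sum_add_distrib, Finset.mul_sum]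
  ring
end

section
/- (Differential of the Cholesky factor.) Let Λ(t) be a differentiable curve of r × r symmetric positive definite matrices and let L(t) be the unique lower triangular matrix with positive diagonal such that L(t) L(t)^T = Λ(t); then L(t) is differentiable and dL = L · k(A), where A = L^{−1} (dΛ) L^{−T} and k(A) = Ā − (1/2) dg(A). -/
open Matrix

attribute [local instance] Matrix.normedAddCommGroup Matrix.normedSpace

/-- `k(A) = Ā − (1/2) dg(A)`. -/
noncomputable def kfun {r : ℕ} (A : Matrix (Fin r) (Fin r) ℝ) : Matrix (Fin r) (Fin r) ℝ :=
  ltri A - (1 / 2 : ℝ) • Matrix.diagonal (fun i => A i i)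

/-- **Differential of the Cholesky factor.** If `Λ(t)` is a differentiable curve of
symmetric positive definite matrices and `L(t)` is the (unique) lower triangular matrix
with positive diagonal such that `L(t) L(t)ᵀ = Λ(t)`, then `L` is differentiable and
`dL = L · k(A)` where `A = L⁻¹ (dΛ) L⁻ᵀ` and `k(A) = Ā − (1/2) dg(A)`. -/
theorem cholesky_differential
    (r : ℕ)
    (Λ : ℝ → Matrix (Fin r) (Fin r) ℝ)
    (hΛpd : ∀ t, (Λ t).PosDef)
    (hΛdiff : Differentiable ℝ Λ)
    (L : ℝ → Matrix (Fin r) (Fin r) ℝ)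
    (hLlow : ∀ t, ∀ i j : Fin r, i < j → L t i j = 0)
    (hLdiag : ∀ t, ∀ i : Fin r, 0 < L t i i)
    (hchol : ∀ t, L t * (L t)ᵀ = Λ t) :
    ∀ t : ℝ,
      HasDerivAt L (L t * kfun ((L t)⁻¹ * deriv Λ t * ((L t)⁻¹)ᵀ)) t := by
  intro t
  -- determinant of L is a unit
  have hLdet : ∀ s, IsUnit (L s).det := by
    intro s
    have h1 : (L s).det * (L s).det = (Λ s).det := by
      rw [← hchol s, det_mul, det_transpose]
    have h2 : (Λ s).det ≠ 0 := ne_of_gt (hΛpd s).det_pos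
    refine isUnit_iff_ne_zero.mpr fun h => h2 ?_
    rw [← h1, h, mul_zero]
  -- entrywise Cholesky recursion
  have hentry : ∀ (s : ℝ) (i j : Fin r),
      L s i j * L s j j = Λ s i j - ∑ k ∈ Finset.Iio j, L s i k * L s j k := by
    intro s i j
    have h1 : Λ s i j = ∑ k, L s i k * L s j k := by
      rw [← hchol s]; simp [Matrix.mul_apply]
    have h2 : ∑ k, L s i k * L s j k = ∑ k ∈ Finset.Iic j, L s i k * L s j k := by
      refine (Finset.sum_subset (Finset.subset_univ _) ?_).symm
      intro k _ hk
      have hjk : j < k := by simpa using hk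
      rw [hLlow s j k hjk, mul_zero]
    rw [h1, h2, ← Finset.Iio_insert, Finset.sum_insert (by simp)]
    ring
  -- entrywise derivative of Λ
  have hΛentry : ∀ i j : Fin r, HasDerivAt (fun s => Λ s i j) (deriv Λ t i j) t := by
    intro i j
    have h := (hΛdiff t).hasDerivAt
    replace h := hasDerivAt_pi.mp h
    have h2 := h i
    rw [hasDerivAt_pi] at h2
    exact h2 j
  -- differentiability of each entry of L, by strong induction on columns
  have key : ∀ n : ℕ, ∀ j : Fin r, (j : ℕ) < n → ∀ i : Fin r,
      DifferentiableAt ℝ (fun s => L s i j) t := by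
    intro n
    induction n using Nat.strong_induction_on with
    | _ n ih =>
      intro j hjn
      -- previous columns
      have hprev : ∀ k : Fin r, k < j → ∀ i : Fin r,
          DifferentiableAt ℝ (fun s => L s i k) t :=
        fun k hk i => ih (j : ℕ) hjn k hk i
      -- diagonal entry of column j
      have hdiag : DifferentiableAt ℝ (fun s => L s j j) t := by
        have heq : ∀ s, L s j j =
            Real.sqrt (Λ s j j - ∑ k ∈ Finset.Iio j, L s j k * L s j k) := by
          intro s
          rw [← hentry s j j, Real.sqrt_mul_self (hLdiag s j).le]
        have hinner : DifferentiableAt ℝ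
            (fun s => Λ s j j - ∑ k ∈ Finset.Iio j, L s j k * L s j k) t := by
          refine ((hΛentry j j).differentiableAt).sub ?_
          exact DifferentiableAt.fun_sum fun k hk =>
            (hprev k (Finset.mem_Iio.mp hk) j).mul (hprev k (Finset.mem_Iio.mp hk) j)
        have hval : (Λ t j j - ∑ k ∈ Finset.Iio j, L t j k * L t j k) ≠ 0 := by
          rw [← hentry t j j]
          exact ne_of_gt (mul_pos (hLdiag t j) (hLdiag t j))
        have : (fun s => L s j j) = fun s =>
            Real.sqrt (Λ s j j - ∑ k ∈ Finset.Iio j, L s j k * L s j k) :=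
          funext heq
        rw [this]
        exact hinner.sqrt hval
      intro i
      rcases lt_trichotomy i j with hij | hij | hij
      · have : (fun s => L s i j) = fun _ => (0 : ℝ) :=
          funext fun s => hLlow s i j hij
        rw [this]; exact differentiableAt_const 0
      · rw [hij]; exact hdiag
      · -- off-diagonal entry
        have heq : ∀ s, L s i j =
            (Λ s i j - ∑ k ∈ Finset.Iio j, L s i k * L s j k) / L s j j := by
          intro s
          rw [eq_div_iff (ne_of_gt (hLdiag s j))]
          exact hentry s i j
        have hnum : DifferentiableAt ℝ
            (fun s => Λ s i j - ∑ k ∈ Finset.Iio j, L s i k * L s j k) t := by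
          refine ((hΛentry i j).differentiableAt).sub ?_
          exact DifferentiableAt.fun_sum fun k hk =>
            (hprev k (Finset.mem_Iio.mp hk) i).mul (hprev k (Finset.mem_Iio.mp hk) j)
        have : (fun s => L s i j) = fun s =>
            (Λ s i j - ∑ k ∈ Finset.Iio j, L s i k * L s j k) / L s j j :=
          funext heq
        rw [this]
        exact hnum.div hdiag (ne_of_gt (hLdiag t j))
  have hLdiff : ∀ i j : Fin r, DifferentiableAt ℝ (fun s => L s i j) t :=
    fun i j => key r j j.isLt i
  -- the derivative matrix
  set M : Matrix (Fin r) (Fin r) ℝ := fun i j => deriv (fun s => L s i j) t with hMdef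
  have hMd : ∀ i j : Fin r, HasDerivAt (fun s => L s i j) (M i j) t :=
    fun i j => (hLdiff i j).hasDerivAt
  have hLM : HasDerivAt L M t := by
    refine hasDerivAt_pi.mpr ?_; intro i; rw [hasDerivAt_pi]; intro j; exact hMd i j
  -- M is lower triangular
  have hMlow : ∀ i j : Fin r, i < j → M i j = 0 := by
    intro i j hij
    have hzero : HasDerivAt (fun s => L s i j) 0 t := by
      have : (fun s => L s i j) = fun _ => (0 : ℝ) := funext fun s => hLlow s i j hij
      rw [this]; exact hasDerivAt_const t 0
    exact (hMd i j).unique hzero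
  -- the derivative of Λ equals M Lᵀ + L Mᵀ
  have hdΛ : deriv Λ t = M * (L t)ᵀ + L t * Mᵀ := by
    have hprod : HasDerivAt (fun s => L s * (L s)ᵀ) (M * (L t)ᵀ + L t * Mᵀ) t := by
      refine hasDerivAt_pi.mpr ?_; intro i; rw [hasDerivAt_pi]; intro j
      have h1 : HasDerivAt (fun s => ∑ k, L s i k * L s j k)
          (∑ k, (M i k * L t j k + L t i k * M j k)) t :=
        HasDerivAt.fun_sum fun k _ => (hMd i k).mul (hMd j k)
      have h2 : (fun s => (L s * (L s)ᵀ) i j) = fun s => ∑ k, L s i k * L s j k := by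
        funext s; simp [Matrix.mul_apply]
      have h3 : (M * (L t)ᵀ + L t * Mᵀ) i j = ∑ k, (M i k * L t j k + L t i k * M j k) := by
        simp [Matrix.mul_apply, Matrix.add_apply, Finset.sum_add_distrib]
      rw [h3]
      exact h2 ▸ h1
    have hΛfun : (fun s => L s * (L s)ᵀ) = Λ := funext hchol
    rw [hΛfun] at hprod
    exact ((hΛdiff t).hasDerivAt.unique hprod)
  -- algebra with inverses
  have hdetT : IsUnit (L t)ᵀ.det := by rw [det_transpose]; exact hLdet t
  have h1 : (L t)⁻¹ * L t = 1 := nonsing_inv_mul _ (hLdet t)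
  have h1' : L t * (L t)⁻¹ = 1 := mul_nonsing_inv _ (hLdet t)
  have h2 : (L t)ᵀ * ((L t)⁻¹)ᵀ = 1 := by
    rw [transpose_nonsing_inv]; exact mul_nonsing_inv _ hdetT
  set N : Matrix (Fin r) (Fin r) ℝ := (L t)⁻¹ * M with hNdef
  have hA : (L t)⁻¹ * deriv Λ t * ((L t)⁻¹)ᵀ = N + Nᵀ := by
    rw [hdΛ, hNdef, transpose_mul]
    calc (L t)⁻¹ * (M * (L t)ᵀ + L t * Mᵀ) * ((L t)⁻¹)ᵀ
        = (L t)⁻¹ * M * ((L t)ᵀ * ((L t)⁻¹)ᵀ) + ((L t)⁻¹ * L t) * (Mᵀ * ((L t)⁻¹)ᵀ) := by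
          noncomm_ring
      _ = (L t)⁻¹ * M + Mᵀ * ((L t)⁻¹)ᵀ := by rw [h1, h2, Matrix.mul_one, Matrix.one_mul]
  -- N is lower triangular
  haveI : Invertible (L t) := (L t).invertibleOfIsUnitDet (hLdet t)
  have hLbt : BlockTriangular (L t) (OrderDual.toDual : Fin r → (Fin r)ᵒᵈ) := by
    intro i j hij
    exact hLlow t i j hij
  have hMbt : BlockTriangular M (OrderDual.toDual : Fin r → (Fin r)ᵒᵈ) := by
    intro i j hij
    exact hMlow i j hij
  have hNbt : BlockTriangular N (OrderDual.toDual : Fin r → (Fin r)ᵒᵈ) :=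
    (blockTriangular_inv_of_blockTriangular hLbt).mul hMbt
  have hNup : ∀ i j : Fin r, i < j → N i j = 0 := fun i j hij => hNbt hij
  -- kfun (N + Nᵀ) = N
  have hk : kfun (N + Nᵀ) = N := by
    funext i j
    simp only [kfun, ltri, Matrix.sub_apply, Matrix.add_apply, Matrix.transpose_apply,
      Matrix.smul_apply, Matrix.diagonal_apply, smul_eq_mul]
    rcases lt_trichotomy i j with hij | hij | hij
    · rw [if_neg (not_le.mpr hij), if_neg (ne_of_lt hij), hNup i j hij]
      ring
    · subst hij
      rw [if_pos le_rfl, if_pos rfl]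
      ring
    · rw [if_pos hij.le, if_neg (ne_of_gt hij), hNup j i hij]
      ring
  rw [hA, hk, hNdef, ← Matrix.mul_assoc, h1', Matrix.one_mul]
  exact hLM
end

section
/- Let Λ be an r × r symmetric positive definite matrix with Cholesky factor L (lower triangular, positive diagonal, Λ = LL^T), and let dΛ be any symmetric r × r matrix (a differential of Λ). With A = L^{−1}(dΛ)L^{−T}, the half-vectorization of k(A) = Ā − (1/2)dg(A) satisfies vec(k(A)) = (1/2) E_r^T D_r^T (L^{−1} ⊗ L^{−1}) vec(dΛ), where E_r is the r(r+1)/2 × r² elimination matrix (E_r vec(A) = v(A)), D_r is the r² × r(r+1)/2 duplication matrix (D_r v(A) = vec(A) for symmetric A), and ⊗ is the Kronecker product. -/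
/-!
The Kronecker identity `(B ⊗ C) vec X = vec (C X Bᵀ)` turns `(L⁻¹ ⊗ L⁻¹) vec(dΛ)` into `vec(A)`,
and `A` is symmetric. For any `A`, `D_rᵀ vec(A)` is the half-vectorization of `A + Aᵀ − dg(A)`,
and `E_rᵀ` re-embeds a half-vectorization as the lower-triangular part of a matrix. For symmetric
`A` this yields the lower-triangular part of `2A − dg(A)`, which is `2 k(A)`.
-/

open Matrix Kronecker

/-- Index set of the lower-triangular positions of an `r × r` matrix
(the index set of the half-vectorization `v(·)`). -/
abbrev LTIdx (r : ℕ) := {q : Fin r × Fin r // q.2 ≤ q.1}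

/-- The elimination matrix `E_r` with `E_r vec(A) = v(A)`. -/
def Em (r : ℕ) : Matrix (LTIdx r) (Fin r × Fin r) ℝ :=
  fun q p => if p = (q.1.2, q.1.1) then 1 else 0

/-- The duplication matrix `D_r` with `D_r v(A) = vec(A)` for symmetric `A`. -/
def Dm (r : ℕ) : Matrix (Fin r × Fin r) (LTIdx r) ℝ :=
  fun p q => if q.1 = (p.2, p.1) ∨ q.1 = (p.1, p.2) then 1 else 0

def vech {r : ℕ} (M : Matrix (Fin r) (Fin r) ℝ) : LTIdx r → ℝ := fun q => M q.1.1 q.1.2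

theorem Em_transpose_mulVec_vech {r : ℕ} (M : Matrix (Fin r) (Fin r) ℝ) :
    (Em r)ᵀ *ᵥ vech M = vecm (ltri M) := by
  funext ⟨c, ρ⟩
  simp only [mulVec, dotProduct, transpose_apply, Em, vech, vecm, ltri, ite_mul, one_mul,
    zero_mul]
  split_ifs with hcρ
  · rw [Finset.sum_eq_single_of_mem (⟨(ρ, c), hcρ⟩ : LTIdx r) (Finset.mem_univ _)]
    · simp
    · rintro ⟨⟨a, b⟩, _⟩ _ hne
      simp only [Prod.mk.injEq] at hne ⊢
      grind
  · refine Finset.sum_eq_zero fun ⟨⟨a, b⟩, hab⟩ _ => if_neg ?_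
    simp only [Prod.mk.injEq]
    grind

theorem Dm_transpose_mulVec_vecm {r : ℕ} (A : Matrix (Fin r) (Fin r) ℝ) :
    (Dm r)ᵀ *ᵥ vecm A = vech (A + Aᵀ - diagonal fun i => A i i) := by
  funext ⟨⟨a, b⟩, hba⟩
  have hmem : ∀ p : Fin r × Fin r,
      ((a, b) = (p.2, p.1) ∨ (a, b) = (p.1, p.2)) ↔ p ∈ ({(b, a), (a, b)} : Finset _) := by
    rintro ⟨c, d⟩
    simp only [Prod.mk.injEq, Finset.mem_insert, Finset.mem_singleton]
    tauto
  simp only [mulVec, dotProduct, transpose_apply, Dm, hmem, ite_mul, one_mul, zero_mul,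
    Finset.sum_ite_mem, Finset.univ_inter, vech, vecm, Matrix.sub_apply, Matrix.add_apply,
    diagonal_apply]
  by_cases hab : a = b
  · subst hab
    simp
  · rw [Finset.sum_pair (by simp [Ne.symm hab])]
    simp [hab]

theorem kfun_eq_of_transpose_eq {r : ℕ} {A : Matrix (Fin r) (Fin r) ℝ} (hA : Aᵀ = A) :
    kfun A = (1 / 2 : ℝ) • ltri (A + Aᵀ - diagonal fun i => A i i) := by
  ext i j
  by_cases hij : j ≤ i <;> by_cases hd : i = j <;>
    simp [kfun, ltri, hA, hij, hd] <;> ring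

theorem vec_kfun_cholesky_differential_general
    (r : ℕ)
    (L : Matrix (Fin r) (Fin r) ℝ)
    (dΛ : Matrix (Fin r) (Fin r) ℝ) (hdΛ : dΛᵀ = dΛ) :
    vecm (kfun (L⁻¹ * dΛ * (L⁻¹)ᵀ))
      = (1 / 2 : ℝ) • (((Em r)ᵀ * (Dm r)ᵀ * (L⁻¹ ⊗ₖ L⁻¹)) *ᵥ vecm dΛ) := by
  set A := L⁻¹ * dΛ * (L⁻¹)ᵀ
  have hA : Aᵀ = A := by
    simp only [A, transpose_mul, transpose_transpose, hdΛ, Matrix.mul_assoc]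
  -- `vecm` is definitionally Mathlib's `Matrix.vec`
  have hvec : (L⁻¹ ⊗ₖ L⁻¹) *ᵥ vecm dΛ = vecm A := kronecker_mulVec_vec _ _ _
  rw [← mulVec_mulVec, hvec, ← mulVec_mulVec, Dm_transpose_mulVec_vecm,
    Em_transpose_mulVec_vech, kfun_eq_of_transpose_eq hA]
  rfl

/-- **Half-vectorized form of the Cholesky differential.** For `Λ` symmetric positive
definite with Cholesky factor `L` and any symmetric differential `dΛ`, with
`A = L⁻¹ (dΛ) L⁻ᵀ` one has `vec(k(A)) = (1/2) E_rᵀ D_rᵀ (L⁻¹ ⊗ L⁻¹) vec(dΛ)`. -/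
theorem vec_kfun_cholesky_differential
    (r : ℕ)
    (Λ : Matrix (Fin r) (Fin r) ℝ) (hΛ : Λ.PosDef)
    (L : Matrix (Fin r) (Fin r) ℝ)
    (hLlow : ∀ i j : Fin r, i < j → L i j = 0)
    (hLdiag : ∀ i : Fin r, 0 < L i i)
    (hchol : L * Lᵀ = Λ)
    (dΛ : Matrix (Fin r) (Fin r) ℝ) (hdΛ : dΛᵀ = dΛ) :
    vecm (kfun (L⁻¹ * dΛ * (L⁻¹)ᵀ))
      = (1 / 2 : ℝ) • (((Em r)ᵀ * (Dm r)ᵀ * (L⁻¹ ⊗ₖ L⁻¹)) *ᵥ vecm dΛ) :=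
  vec_kfun_cholesky_differential_general r L dΛ hdΛ
end

section
/- Let L be an r × r lower triangular matrix with positive diagonal, Λ = LL^T, λ ∈ ℝ^r, b̃ ∈ ℝ^r fixed, and b = L b̃ + λ. Let (λ, L) depend differentiably on a parameter, with differentials dλ and dL = L·k(L^{−1}(dΛ)L^{−T}). Then for any a ∈ ℝ^r, a^T db = (1/2) vec(L^{−T} B̃ L^{−1})^T vec(dΛ) + a^T dλ, where B = L^T a b̃^T and B̃ = B̄ + B̄^T − dg(B). -/
open Matrix

lemma trace_transpose_mul_eq {r : ℕ} (A D : Matrix (Fin r) (Fin r) ℝ) :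
    Matrix.trace (Aᵀ * D) = ∑ j, ∑ i, A i j * D i j := by
  simp [Matrix.trace, Matrix.diag, Matrix.mul_apply, Matrix.transpose_apply]

lemma key_sum {r : ℕ} (B M : Matrix (Fin r) (Fin r) ℝ) (hM : ∀ m n, M n m = M m n) :
    ∑ m, ∑ n, B m n * kfun M m n
      = (1/2) * ∑ m, ∑ n,
          (ltri B + (ltri B)ᵀ - Matrix.diagonal (fun i => B i i)) m n * M m n := by
  set S := ∑ m, ∑ n, ltri B m n * M m n with hS
  set T := ∑ m, B m m * M m m with hT
  have hL1 : ∀ m n : Fin r, B m n * kfun M m n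
      = ltri B m n * M m n - (1/2) * (if n = m then B m m * M m m else 0) := by
    intro m n
    simp only [kfun, Matrix.sub_apply, Matrix.smul_apply, Matrix.diagonal_apply,
      smul_eq_mul, ltri]
    by_cases h : n = m
    · subst h; simp; ring
    · have h' : ¬ m = n := fun e => h e.symm
      by_cases h2 : n ≤ m <;> simp [h, h', h2]
  have lhs_eq : (∑ m, ∑ n, B m n * kfun M m n) = S - (1/2) * T := by
    simp only [hL1, Finset.sum_sub_distrib]
    congr 1
    rw [hT, Finset.mul_sum]
    refine Finset.sum_congr rfl fun m _ => ?_
    simp [Finset.sum_ite_eq']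
  have hswap : (∑ m, ∑ n, ltri B n m * M m n) = S := by
    rw [Finset.sum_comm, hS]
    exact Finset.sum_congr rfl fun m _ => Finset.sum_congr rfl fun n _ => by rw [hM]
  have rhs_eq : (∑ m, ∑ n,
      (ltri B + (ltri B)ᵀ - Matrix.diagonal (fun i => B i i)) m n * M m n)
      = S + S - T := by
    have hpt : ∀ m n : Fin r,
        (ltri B + (ltri B)ᵀ - Matrix.diagonal (fun i => B i i)) m n * M m n
        = ltri B m n * M m n + ltri B n m * M m n
            - (if m = n then B m m * M m n else 0) := by
      intro m n
      simp only [Matrix.sub_apply, Matrix.add_apply, Matrix.transpose_apply,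
        Matrix.diagonal_apply]
      by_cases h : m = n
      · subst h; ring_nf; simp; ring
      · simp [h]; ring
    simp only [hpt, Finset.sum_sub_distrib, Finset.sum_add_distrib, hswap]
    congr 1
    rw [hT]
    refine Finset.sum_congr rfl fun m _ => ?_
    simp [Finset.sum_ite_eq]
  rw [lhs_eq, rhs_eq]; ring

lemma vecm_dot {r : ℕ} (A D : Matrix (Fin r) (Fin r) ℝ) :
    vecm A ⬝ᵥ vecm D = Matrix.trace (Aᵀ * D) := by
  rw [trace_transpose_mul_eq]
  simp [vecm, dotProduct, Fintype.sum_prod_type]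

/-- **Differential identity for `b = L b̃ + λ`.** With `Λ = LLᵀ`, `dL = L·k(L⁻¹(dΛ)L⁻ᵀ)`,
`db = (dL) b̃ + dλ`, `B = Lᵀ a b̃ᵀ` and `B̃ = B̄ + B̄ᵀ − dg(B)`, one has
`aᵀ db = (1/2) vec(L⁻ᵀ B̃ L⁻¹)ᵀ vec(dΛ) + aᵀ dλ`. -/
theorem dot_differential_affine_cholesky
    (r : ℕ)
    (L : Matrix (Fin r) (Fin r) ℝ)
    (hLlow : ∀ i j : Fin r, i < j → L i j = 0)
    (hLdiag : ∀ i : Fin r, 0 < L i i)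
    (Λ : Matrix (Fin r) (Fin r) ℝ) (hΛ : Λ = L * Lᵀ)
    (lam btil a : Fin r → ℝ)
    (dΛ : Matrix (Fin r) (Fin r) ℝ) (hdΛ : dΛᵀ = dΛ)
    (dlam : Fin r → ℝ)
    (dL : Matrix (Fin r) (Fin r) ℝ) (hdL : dL = L * kfun (L⁻¹ * dΛ * (L⁻¹)ᵀ))
    (db : Fin r → ℝ) (hdb : db = dL *ᵥ btil + dlam)
    (B : Matrix (Fin r) (Fin r) ℝ) (hB : B = Matrix.vecMulVec (Lᵀ *ᵥ a) btil)
    (Btil : Matrix (Fin r) (Fin r) ℝ)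
    (hBtil : Btil = ltri B + (ltri B)ᵀ - Matrix.diagonal (fun i => B i i)) :
    a ⬝ᵥ db
      = (1 / 2) * (vecm ((L⁻¹)ᵀ * Btil * L⁻¹) ⬝ᵥ vecm dΛ) + a ⬝ᵥ dlam := by
  subst hΛ hdL hdb hBtil hB
  set C := L⁻¹ with hC
  set M := C * dΛ * Cᵀ with hMdef
  have hMs : ∀ m n : Fin r, M n m = M m n := by
    intro m n
    have h : Mᵀ = M := by
      rw [hMdef, Matrix.transpose_mul, Matrix.transpose_mul, Matrix.transpose_transpose,
        hdΛ, Matrix.mul_assoc]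
    exact (congrFun (congrFun h n) m).symm
  set Bm := Matrix.vecMulVec (Lᵀ *ᵥ a) btil with hBm
  rw [dotProduct_add]
  congr 1
  have e1 : a ⬝ᵥ ((L * kfun M) *ᵥ btil) = ∑ m, ∑ n, Bm m n * kfun M m n := by
    have hv : a ᵥ* L = Lᵀ *ᵥ a := (Matrix.mulVec_transpose L a).symm
    rw [Matrix.dotProduct_mulVec, ← Matrix.vecMul_vecMul, hv]
    simp only [Matrix.vecMul, dotProduct, Finset.sum_mul, hBm, Matrix.vecMulVec_apply]
    rw [Finset.sum_comm]
    exact Finset.sum_congr rfl fun m _ => Finset.sum_congr rfl fun n _ => by ring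
  have e2 : vecm (Cᵀ * (ltri Bm + (ltri Bm)ᵀ - Matrix.diagonal (fun i => Bm i i)) * C) ⬝ᵥ vecm dΛ
      = ∑ m, ∑ n, (ltri Bm + (ltri Bm)ᵀ - Matrix.diagonal (fun i => Bm i i)) m n * M m n := by
    set Bt := ltri Bm + (ltri Bm)ᵀ - Matrix.diagonal (fun i => Bm i i) with hBt
    rw [vecm_dot]
    have h1 : (Cᵀ * Bt * C)ᵀ * dΛ = Cᵀ * (Btᵀ * (C * dΛ)) := by
      simp only [Matrix.transpose_mul, Matrix.transpose_transpose, Matrix.mul_assoc]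
    rw [h1, Matrix.trace_mul_comm, Matrix.mul_assoc, ← hMdef, trace_transpose_mul_eq,
      Finset.sum_comm]
  rw [e1, e2, key_sum Bm M hMs]
end

section
/- Let W be an r × r lower triangular matrix with positive diagonal entries, Ω = WW^T, and parametrize W by ω = v(W*) where W*_{ii} = log(W_{ii}) and W*_{ij} = W_{ij} for i ≠ j. Then the map ω ↦ v(Ω) from ℝ^{r(r+1)/2} to ℝ^{r(r+1)/2} has Jacobian determinant |∂v(Ω)/∂ω| = 2^r · ∏_{i=1}^r W_{ii}^{r−i+2}. Equivalently, the density induced on ω by a density p(Ω) on positive definite matrices satisfies log p(ω) = log p(Ω) + r log 2 + Σ_{i=1}^r (r−i+2) log(W_{ii}). -/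
open Matrix

/-- The log-Cholesky parametrization `ω ↦ W`: `W` is lower triangular with
`W_{ii} = exp(ω_{ii})` and `W_{ij} = ω_{ij}` for `j < i`. -/
noncomputable def Wof {r : ℕ} (ω : LTIdx r → ℝ) : Matrix (Fin r) (Fin r) ℝ :=
  fun i j => if h : j ≤ i then
      (if i = j then Real.exp (ω ⟨(i, j), h⟩) else ω ⟨(i, j), h⟩) else 0

/-- The half-vectorization of `Ω(ω) = W(ω) W(ω)ᵀ` as a function of `ω`. -/
noncomputable def vOmega {r : ℕ} (ω : LTIdx r → ℝ) : LTIdx r → ℝ :=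
  fun q => (Wof ω * (Wof ω)ᵀ) q.1.1 q.1.2


/-!
Order the coordinates `ω_{ij}` (`j ≤ i`) column-major: by column `j`, then by row `i`.
Only `W_{ij}` depends on `ω_{ij}`, so `∂Ω_{ab}/∂ω_{ij} = ∂W_{ij}/∂ω_{ij} · (δ_{ai} W_{bj} + δ_{bi} W_{aj})`,
and this vanishes whenever `(j, i)` comes after `(b, a)`, because `W` is lower triangular.
The Jacobian is therefore triangular, with diagonal entries `2 W_{jj}²` (for `i = j`) and `W_{jj}`
(for `i > j`); column `j` (0-based) contributes `2 W_{jj}^{r-j+1}`.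
-/

namespace LTIdx

variable {r : ℕ}

def colLexKey (q : LTIdx r) : Lex (Fin r × Fin r) := toLex (q.1.2, q.1.1)

theorem colLexKey_injective : Function.Injective (colLexKey (r := r)) := by
  rintro ⟨⟨i, j⟩, _⟩ ⟨⟨i', j'⟩, _⟩ h
  simp only [colLexKey, toLex_inj, Prod.mk.injEq] at h
  obtain ⟨rfl, rfl⟩ := h
  rfl

abbrev colLexOrder : LinearOrder (LTIdx r) := LinearOrder.lift' colLexKey colLexKey_injective

theorem prod_eq_prod_prod_Ici {M : Type*} [CommMonoid M] (f : Fin r → Fin r → M) :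
    ∏ q : LTIdx r, f q.1.2 q.1.1 = ∏ j : Fin r, ∏ i ∈ Finset.Ici j, f j i := by
  let e : LTIdx r ≃ Σ j : Fin r, {i : Fin r // j ≤ i} :=
    { toFun q := ⟨q.1.2, q.1.1, q.2⟩
      invFun s := ⟨(s.2.1, s.1), s.2.2⟩ }
  rw [Fintype.prod_equiv e (fun q => f q.1.2 q.1.1) (fun s => f s.1 s.2) (fun _ => rfl),
    ← Finset.univ_sigma_univ, Finset.prod_sigma]
  refine Finset.prod_congr rfl fun j _ => ?_
  exact Finset.prod_subtype _ (fun _ => Finset.mem_Ici) (f j) |>.symm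

end LTIdx

variable {r : ℕ}

theorem Wof_diag (ω : LTIdx r → ℝ) (i : Fin r) : Wof ω i i = Real.exp (ω ⟨(i, i), le_rfl⟩) := by
  simp [Wof]

theorem Wof_diag_pos (ω : LTIdx r → ℝ) (i : Fin r) : 0 < Wof ω i i := by
  rw [Wof_diag]
  exact Real.exp_pos _

theorem Wof_eq_zero_of_lt (ω : LTIdx r → ℝ) {i j : Fin r} (h : i < j) : Wof ω i j = 0 := by
  simp [Wof, not_le.2 h]

/-- `∂W_{ij}/∂ω_{ij}`. -/
noncomputable def partialWof (ω : LTIdx r → ℝ) (i j : Fin r) : ℝ :=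
  if i = j then Wof ω i i else 1

noncomputable def fderivWof (ω : LTIdx r → ℝ) (i j : Fin r) : (LTIdx r → ℝ) →L[ℝ] ℝ :=
  if h : j ≤ i then partialWof ω i j • ContinuousLinearMap.proj ⟨(i, j), h⟩ else 0

theorem hasFDerivAt_Wof_apply (ω : LTIdx r → ℝ) (i j : Fin r) :
    HasFDerivAt (fun ω' => Wof ω' i j) (fderivWof ω i j) ω := by
  unfold Wof fderivWof partialWof
  by_cases hji : j ≤ i
  · simp only [dif_pos hji]
    by_cases hij : i = j
    · subst hij
      simpa [Wof_diag] using (hasFDerivAt_apply (⟨(i, i), hji⟩ : LTIdx r) ω).exp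
    · simpa [hij] using hasFDerivAt_apply (⟨(i, j), hji⟩ : LTIdx r) ω
  · simpa only [dif_neg hji] using hasFDerivAt_const 0 ω

theorem fderivWof_single (ω : LTIdx r → ℝ) (i k : Fin r) (c : LTIdx r) :
    fderivWof ω i k (Pi.single c 1) = if c.1 = (i, k) then partialWof ω i k else 0 := by
  obtain ⟨⟨a, b⟩, hba⟩ := c
  by_cases hki : k ≤ i
  · simp [fderivWof, hki, Pi.single_apply, Subtype.ext_iff, eq_comm]
  · simp only [fderivWof, dif_neg hki, _root_.zero_apply, Prod.mk.injEq, right_eq_ite_iff]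
    rintro ⟨rfl, rfl⟩
    exact absurd hba hki

noncomputable def fderivVOmega (ω : LTIdx r → ℝ) : (LTIdx r → ℝ) →L[ℝ] (LTIdx r → ℝ) :=
  ContinuousLinearMap.pi fun q =>
    ∑ k : Fin r, (Wof ω q.1.1 k • fderivWof ω q.1.2 k + Wof ω q.1.2 k • fderivWof ω q.1.1 k)

theorem hasFDerivAt_vOmega (ω : LTIdx r → ℝ) : HasFDerivAt vOmega (fderivVOmega ω) ω := by
  have hv : vOmega = fun (ω' : LTIdx r → ℝ) q => ∑ k, Wof ω' q.1.1 k * Wof ω' q.1.2 k := by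
    funext ω' q
    simp [vOmega, Matrix.mul_apply]
  rw [hv]
  exact hasFDerivAt_pi.2 fun q => HasFDerivAt.fun_sum fun k _ =>
    (hasFDerivAt_Wof_apply ω q.1.1 k).mul (hasFDerivAt_Wof_apply ω q.1.2 k)

theorem toMatrix'_fderivVOmega_apply (ω : LTIdx r → ℝ) (p c : LTIdx r) :
    LinearMap.toMatrix' (fderivVOmega ω : (LTIdx r → ℝ) →ₗ[ℝ] (LTIdx r → ℝ)) p c =
      partialWof ω c.1.1 c.1.2 * ((if p.1.1 = c.1.1 then Wof ω p.1.2 c.1.2 else 0) +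
        (if p.1.2 = c.1.1 then Wof ω p.1.1 c.1.2 else 0)) := by
  rw [LinearMap.toMatrix'_apply]
  simp only [fderivVOmega, ContinuousLinearMap.coe_coe, ContinuousLinearMap.pi_apply,
    _root_.sum_apply, _root_.add_apply, _root_.smul_apply, fderivWof_single, smul_eq_mul]
  rw [Finset.sum_eq_single c.1.2 (fun k _ hk => by simp [Prod.ext_iff, hk.symm]) (by simp)]
  obtain ⟨⟨i, j⟩, hji⟩ := c
  obtain ⟨⟨a, b⟩, hba⟩ := p
  simp only [Prod.mk.injEq, and_true]
  by_cases hai : a = i <;> by_cases hbi : b = i <;> subst_vars <;> simp [*, Ne.symm] <;> ring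

theorem toMatrix'_fderivVOmega_eq_zero_of_colLexKey_lt (ω : LTIdx r → ℝ) {p c : LTIdx r}
    (hpc : p.colLexKey < c.colLexKey) :
    LinearMap.toMatrix' (fderivVOmega ω : (LTIdx r → ℝ) →ₗ[ℝ] (LTIdx r → ℝ)) p c = 0 := by
  obtain ⟨⟨a, b⟩, hba⟩ := p
  obtain ⟨⟨i, j⟩, hji⟩ := c
  simp only [LTIdx.colLexKey, Prod.Lex.toLex_lt_toLex] at hpc hba hji
  rw [toMatrix'_fderivVOmega_apply]
  dsimp only
  have hrow : a = i → Wof ω b j = 0 := by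
    rintro rfl
    refine Wof_eq_zero_of_lt ω ?_
    rcases hpc with hbj | ⟨-, hai⟩
    · exact hbj
    · exact absurd hai (lt_irrefl a)
  have hcol : b ≠ i := by
    rintro rfl
    rcases hpc with hbj | ⟨rfl, hai⟩
    · exact absurd hji (not_le.2 hbj)
    · exact absurd hba (not_le.2 hai)
  rw [if_neg hcol, add_zero]
  split_ifs with hai
  · rw [hrow hai, mul_zero]
  · rw [mul_zero]

theorem toMatrix'_fderivVOmega_diag (ω : LTIdx r → ℝ) (p : LTIdx r) :
    LinearMap.toMatrix' (fderivVOmega ω : (LTIdx r → ℝ) →ₗ[ℝ] (LTIdx r → ℝ)) p p =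
      (if p.1.1 = p.1.2 then 2 * Wof ω p.1.2 p.1.2 else 1) * Wof ω p.1.2 p.1.2 := by
  obtain ⟨⟨i, j⟩, hji⟩ := p
  rw [toMatrix'_fderivVOmega_apply, partialWof]
  by_cases hij : i = j
  · subst hij
    simp only [if_true]
    ring
  · simp [hij, Ne.symm hij]

theorem Fin.prod_Ici_ite_mul {M : Type*} [CommMonoid M] (j : Fin r) (a x : M) :
    ∏ i ∈ Finset.Ici j, (if i = j then a else 1) * x = a * x ^ (r - j) := by
  rw [Finset.prod_mul_distrib, Finset.prod_ite_eq', if_pos (Finset.mem_Ici.2 le_rfl),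
    Finset.prod_const, Fin.card_Ici]

theorem det_fderivVOmega (ω : LTIdx r → ℝ) :
    LinearMap.det (fderivVOmega ω : (LTIdx r → ℝ) →ₗ[ℝ] (LTIdx r → ℝ)) =
      2 ^ r * ∏ j : Fin r, Wof ω j j ^ (r - j + 1) := by
  let _ := LTIdx.colLexOrder (r := r)
  rw [← LinearMap.det_toMatrix', Matrix.det_of_isLowerTriangular _
    fun p c hpc => toMatrix'_fderivVOmega_eq_zero_of_colLexKey_lt ω hpc]
  simp_rw [toMatrix'_fderivVOmega_diag]
  rw [LTIdx.prod_eq_prod_prod_Ici (fun j i => (if i = j then 2 * Wof ω j j else 1) * Wof ω j j),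
    ← Fin.prod_const, ← Finset.prod_mul_distrib]
  refine Finset.prod_congr rfl fun j _ => ?_
  rw [Fin.prod_Ici_ite_mul]
  ring

theorem log_two_pow_mul_prod_Wof_diag_pow (ω : LTIdx r → ℝ) :
    Real.log (2 ^ r * ∏ j : Fin r, Wof ω j j ^ (r - j + 1)) =
      r * Real.log 2 + ∑ j : Fin r, ((r : ℝ) - j + 1) * Real.log (Wof ω j j) := by
  have hW : ∀ j : Fin r, Wof ω j j ^ (r - j + 1) ≠ 0 := fun j => (pow_pos (Wof_diag_pos ω j) _).ne'
  rw [Real.log_mul (by positivity) (Finset.prod_ne_zero_iff.2 fun j _ => hW j), Real.log_pow,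
    Real.log_prod fun j _ => hW j]
  congr 1
  refine Finset.sum_congr rfl fun j _ => ?_
  rw [Real.log_pow, Nat.cast_add_one, Nat.cast_sub j.isLt.le]

/-- **Jacobian determinant of the log-Cholesky parametrization of `Ω = WWᵀ`.**
The map `ω ↦ v(Ω)` has Jacobian determinant `|∂v(Ω)/∂ω| = 2^r ∏_{i=1}^r W_{ii}^{r−i+2}`
(for the 0-based index `j`, the exponent is `r − j + 1`); equivalently, the density induced
on `ω` by a density `p(Ω)` on positive definite matrices satisfies
`log p(ω) = log p(Ω) + r log 2 + Σ_{i=1}^r (r−i+2) log(W_{ii})`. -/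
theorem jacobian_logCholesky
    (r : ℕ) (ω0 : LTIdx r → ℝ) :
    |LinearMap.det ((fderiv ℝ (vOmega (r := r)) ω0 :
        (LTIdx r → ℝ) →L[ℝ] (LTIdx r → ℝ)) : (LTIdx r → ℝ) →ₗ[ℝ] (LTIdx r → ℝ))|
        = 2 ^ r * ∏ j : Fin r, (Wof ω0 j j) ^ (r - (j : ℕ) + 1) ∧
      ∀ pdens : Matrix (Fin r) (Fin r) ℝ → ℝ,
        0 < pdens (Wof ω0 * (Wof ω0)ᵀ) →
        Real.log (pdens (Wof ω0 * (Wof ω0)ᵀ) *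
            |LinearMap.det ((fderiv ℝ (vOmega (r := r)) ω0 :
              (LTIdx r → ℝ) →L[ℝ] (LTIdx r → ℝ)) : (LTIdx r → ℝ) →ₗ[ℝ] (LTIdx r → ℝ))|)
          = Real.log (pdens (Wof ω0 * (Wof ω0)ᵀ)) + r * Real.log 2
              + ∑ j : Fin r, ((r : ℝ) - (j : ℕ) + 1) * Real.log (Wof ω0 j j) := by
  have hpos : 0 < 2 ^ r * ∏ j : Fin r, Wof ω0 j j ^ (r - (j : ℕ) + 1) :=
    mul_pos (pow_pos two_pos r) (Finset.prod_pos fun j _ => pow_pos (Wof_diag_pos ω0 j) _)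
  have habs : |LinearMap.det ((fderiv ℝ (vOmega (r := r)) ω0 :
        (LTIdx r → ℝ) →L[ℝ] (LTIdx r → ℝ)) : (LTIdx r → ℝ) →ₗ[ℝ] (LTIdx r → ℝ))|
      = 2 ^ r * ∏ j : Fin r, Wof ω0 j j ^ (r - (j : ℕ) + 1) := by
    rw [(hasFDerivAt_vOmega ω0).fderiv, det_fderivVOmega, abs_of_pos hpos]
  refine ⟨habs, fun pdens hp => ?_⟩
  rw [habs, Real.log_mul hp.ne' hpos.ne', log_two_pow_mul_prod_Wof_diag_pow, add_assoc]
end
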